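/- arXiv:1910.03328 — 10 statements merged into one kernel-verified Lean document; each statement's English description precedes it below -/
import Mathlib

section
/- For real numbers a, b, c, d, the operator 2-norm of the real 2×2 matrix A = [[a,b],[c,d]] equals (√((a+d)² + (c−b)²) + √((a−d)² + (b+c)²))/2. -/
/-!
Identify `ℝ²` with `ℂ` via `(x, y) ↦ x + y i`. Then `[[a, b], [c, d]]` acts as
`z ↦ w z + v z̄` with `w = ((a + d) + (c - b) i) / 2` and `v = ((a - d) + (b + c) i) / 2`.
The triangle inequality bounds the operator norm by `‖w‖ + ‖v‖`, and equality holds at any `z`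
with `z² = w̄ v`, where `w z` and `v z̄` point in the same direction.
-/

noncomputable def opNorm (A : Matrix (Fin 2) (Fin 2) ℝ) : ℝ :=
  ‖Matrix.toEuclideanCLM (𝕜 := ℝ) (n := Fin 2) A‖

noncomputable def conorm (A : Matrix (Fin 2) (Fin 2) ℝ) : ℝ :=
  Real.sign A.det * (opNorm A⁻¹)⁻¹

noncomputable def arcosh (x : ℝ) : ℝ := Real.log (x + Real.sqrt (x ^ 2 - 1))

noncomputable def AC (x : ℝ) : ℝ :=
  if x < 1 then Real.arccos x / Real.sqrt (1 - x ^ 2)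
  else if x = 1 then 1
  else arcosh x / Real.sqrt (x ^ 2 - 1)

noncomputable def AS (x : ℝ) : ℝ :=
  if x = 1 then Real.sqrt (1 / 3) else Real.sqrt ((AC x ^ 2 - 1) / (1 - x ^ 2))

noncomputable def AT (x : ℝ) : ℝ := (AC x - 1) / AS x

noncomputable def PDcenter (A : Matrix (Fin 2) (Fin 2) ℝ) : ℂ :=
  (((A 0 0 + A 1 1) / 2 : ℝ) : ℂ) + ((|A 1 0 - A 0 1| / 2 : ℝ) : ℂ) * Complex.I

noncomputable def PDradius (A : Matrix (Fin 2) (Fin 2) ℝ) : ℝ :=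
  Real.sqrt (((A 0 0 - A 1 1) / 2) ^ 2 + ((A 0 1 + A 1 0) / 2) ^ 2)

noncomputable def PD (A : Matrix (Fin 2) (Fin 2) ℝ) : Set ℂ :=
  Metric.closedBall (PDcenter A) (PDradius A)

def LogAble (A : Matrix (Fin 2) (Fin 2) ℝ) : Prop :=
  ∀ z ∈ spectrum ℂ (A.map (fun x => (x : ℂ))), ¬(z.im = 0 ∧ z.re ≤ 0)

def IsPrincipalLog (A L : Matrix (Fin 2) (Fin 2) ℝ) : Prop :=
  NormedSpace.exp L = A ∧
    ∀ z ∈ spectrum ℂ (L.map (fun x => (x : ℂ))), z.im ∈ Set.Ioo (-Real.pi) Real.pi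

open ComplexConjugate

namespace Complex

noncomputable def mulAddMulConjCLM (w v : ℂ) : ℂ →L[ℝ] ℂ :=
  w • ContinuousLinearMap.id ℝ ℂ + v • (conjCLE : ℂ →L[ℝ] ℂ)

@[simp]
lemma mulAddMulConjCLM_apply (w v z : ℂ) : mulAddMulConjCLM w v z = w * z + v * conj z := rfl

lemma exists_norm_mulAddMulConjCLM_apply_eq (w v : ℂ) :
    ∃ z : ℂ, z ≠ 0 ∧ ‖mulAddMulConjCLM w v z‖ = (‖w‖ + ‖v‖) * ‖z‖ := by
  by_cases hwv : w = 0 ∨ v = 0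
  · refine ⟨1, one_ne_zero, ?_⟩
    rcases hwv with rfl | rfl <;> simp
  obtain ⟨z, hz⟩ := IsAlgClosed.exists_pow_nat_eq (conj w * v) two_pos
  have hz0 : z ≠ 0 := by
    rintro rfl
    simp_all
  refine ⟨z, hz0, ?_⟩
  have hnz : ‖z‖ ^ 2 = ‖w‖ * ‖v‖ := by rw [← norm_pow, hz, norm_mul, norm_conj]
  -- `z (w z + v z̄) = w z² + v |z|²`, and both terms are nonnegative multiples of `v`
  have key : z * mulAddMulConjCLM w v z = (‖w‖ * (‖w‖ + ‖v‖) : ℝ) * v := by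
    have hnzC : (‖z‖ : ℂ) ^ 2 = ‖w‖ * ‖v‖ := by exact_mod_cast hnz
    rw [mulAddMulConjCLM_apply]
    push_cast
    linear_combination w * hz + v * mul_conj' z + v * mul_conj' w + v * hnzC
  have norm_key := congrArg norm key
  rw [norm_mul, norm_mul, Complex.norm_of_nonneg (by positivity)] at norm_key
  refine mul_left_cancel₀ (norm_ne_zero_iff.mpr hz0) ?_
  linear_combination norm_key - (‖w‖ + ‖v‖) * hnz

lemma norm_mulAddMulConjCLM (w v : ℂ) : ‖mulAddMulConjCLM w v‖ = ‖w‖ + ‖v‖ := by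
  refine le_antisymm (ContinuousLinearMap.opNorm_le_bound _ (by positivity) fun z => ?_) ?_
  · calc ‖mulAddMulConjCLM w v z‖ ≤ ‖w * z‖ + ‖v * conj z‖ := norm_add_le _ _
      _ = (‖w‖ + ‖v‖) * ‖z‖ := by rw [norm_mul, norm_mul, norm_conj, add_mul]
  · obtain ⟨z, hz0, hz⟩ := exists_norm_mulAddMulConjCLM_apply_eq w v
    refine le_of_mul_le_mul_right ?_ (norm_pos_iff.mpr hz0)
    exact hz ▸ (mulAddMulConjCLM w v).le_opNorm z

end Complex

open Complex

lemma Matrix.toEuclideanCLM_fin_two_eq_repr_comp_mulAddMulConjCLM (a b c d : ℝ) :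
    Matrix.toEuclideanCLM (𝕜 := ℝ) (n := Fin 2) !![a, b; c, d] =
      (orthonormalBasisOneI.repr : ℂ →L[ℝ] EuclideanSpace ℝ (Fin 2)) ∘L
        mulAddMulConjCLM ⟨(a + d) / 2, (c - b) / 2⟩ ⟨(a - d) / 2, (b + c) / 2⟩ ∘L
          (orthonormalBasisOneI.repr.symm : EuclideanSpace ℝ (Fin 2) →L[ℝ] ℂ) := by
  ext x i
  fin_cases i <;> simp [Matrix.mulVec, dotProduct, Fin.sum_univ_two] <;> ring

theorem stmt0 (a b c d : ℝ) :
    opNorm !![a, b; c, d] =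
      (Real.sqrt ((a + d) ^ 2 + (c - b) ^ 2) + Real.sqrt ((a - d) ^ 2 + (b + c) ^ 2)) / 2 := by
  have half_norm (x y : ℝ) : ‖(⟨x / 2, y / 2⟩ : ℂ)‖ = Real.sqrt (x ^ 2 + y ^ 2) / 2 := by
    rw [norm_eq_sqrt_sq_add_sq, div_pow, div_pow, ← add_div, Real.sqrt_div' _ (by norm_num),
      Real.sqrt_sq (by norm_num)]
  rw [opNorm, Matrix.toEuclideanCLM_fin_two_eq_repr_comp_mulAddMulConjCLM,
    ContinuousLinearMap.opNorm_linearIsometryEquiv_comp,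
    ContinuousLinearMap.opNorm_comp_linearIsometryEquiv, norm_mulAddMulConjCLM, half_norm,
    half_norm, add_div]
end

section
/- For real numbers a, b, c, d with A = [[a,b],[c,d]] invertible, ‖A⁻¹‖₂⁻¹ = |(√((a+d)² + (c−b)²) − √((a−d)² + (b+c)²))/2|. -/
/-!
`‖A‖²` is the larger eigenvalue `l` of `AᵀA`, i.e. the larger root of
`(l - (a² + c²)) (l - (b² + d²)) = (ab + cd)²`, and a direct computation shows that this root is
`((P + Q) / 2)²`, where `P` and `Q` are the two square roots of the statement. Since
`A⁻¹ = (det A)⁻¹ • adj A`, where `adj A` has the same `P` and `Q`, and `P² - Q² = 4 det A`, we get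
`‖A⁻¹‖⁻¹ = 2 |det A| / (P + Q) = |P - Q| / 2`.
-/

open Matrix

lemma ContinuousLinearMap.opNorm_eq_of_norm_apply_eq {𝕜 E F : Type*} [NontriviallyNormedField 𝕜]
    [NormedAddCommGroup E] [SeminormedAddCommGroup F] [NormedSpace 𝕜 E] [NormedSpace 𝕜 F]
    {T : E →L[𝕜] F} {M : ℝ} (hM : 0 ≤ M) (hle : ∀ x, ‖T x‖ ≤ M * ‖x‖) {x : E} (hx : x ≠ 0)
    (heq : ‖T x‖ = M * ‖x‖) : ‖T‖ = M :=
  le_antisymm (T.opNorm_le_bound hM hle)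
    (le_of_mul_le_mul_right (heq ▸ T.le_opNorm x) (norm_pos_iff.2 hx))

lemma quadratic_form_le_of_larger_root {u v w l : ℝ} (hu : u ≤ l) (hv : v ≤ l)
    (hl : (l - u) * (l - v) = w ^ 2) (x y : ℝ) :
    u * x ^ 2 + 2 * w * x * y + v * y ^ 2 ≤ l * (x ^ 2 + y ^ 2) := by
  have hsq : (l - u) * ((l - u) * x ^ 2 - 2 * w * x * y + (l - v) * y ^ 2)
      = ((l - u) * x - w * y) ^ 2 := by linear_combination y ^ 2 * hl
  rcases hu.lt_or_eq with hlt | rfl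
  · have hF : 0 ≤ (l - u) * x ^ 2 - 2 * w * x * y + (l - v) * y ^ 2 :=
      nonneg_of_mul_nonneg_right (by rw [hsq]; positivity) (sub_pos.2 hlt)
    linarith
  · obtain rfl : w = 0 := by simpa using hl.symm
    nlinarith [mul_nonneg (sub_nonneg.2 hv) (sq_nonneg y)]

lemma exists_quadratic_form_eq_of_larger_root {u v w l : ℝ} (hl : (l - u) * (l - v) = w ^ 2) :
    ∃ x y : ℝ, (x, y) ≠ 0 ∧ u * x ^ 2 + 2 * w * x * y + v * y ^ 2 = l * (x ^ 2 + y ^ 2) := by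
  by_cases h : w = 0 ∧ l = u
  · obtain ⟨rfl, rfl⟩ := h
    exact ⟨1, 0, by simp, by ring⟩
  · refine ⟨w, l - u, fun h0 => h ?_, by linear_combination (u - l) * hl⟩
    simp only [Prod.mk_eq_zero] at h0
    exact ⟨h0.1, sub_eq_zero.1 h0.2⟩

lemma EuclideanSpace.norm_sq_fin_two (x : EuclideanSpace ℝ (Fin 2)) :
    ‖x‖ ^ 2 = x 0 ^ 2 + x 1 ^ 2 := by
  simp [EuclideanSpace.norm_sq_eq, Fin.sum_univ_two]

lemma norm_toEuclideanCLM_fin_two_sq (a b c d : ℝ) (x : EuclideanSpace ℝ (Fin 2)) :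
    ‖toEuclideanCLM (𝕜 := ℝ) !![a, b; c, d] x‖ ^ 2 =
      (a ^ 2 + c ^ 2) * x 0 ^ 2 + 2 * (a * b + c * d) * x 0 * x 1 + (b ^ 2 + d ^ 2) * x 1 ^ 2 := by
  simp only [EuclideanSpace.norm_sq_eq, Fin.sum_univ_two, ofLp_toEuclideanCLM]
  simp [mulVec, dotProduct, Fin.sum_univ_two]
  ring

theorem opNorm_fin_two (a b c d : ℝ) :
    opNorm !![a, b; c, d] =
      (√((a + d) ^ 2 + (c - b) ^ 2) + √((a - d) ^ 2 + (b + c) ^ 2)) / 2 := by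
  set P := √((a + d) ^ 2 + (c - b) ^ 2)
  set Q := √((a - d) ^ 2 + (b + c) ^ 2)
  set σ := (P + Q) / 2
  have hP : P ^ 2 = (a + d) ^ 2 + (c - b) ^ 2 := Real.sq_sqrt (by positivity)
  have hQ : Q ^ 2 = (a - d) ^ 2 + (b + c) ^ 2 := Real.sq_sqrt (by positivity)
  have hPQ : (P * Q) ^ 2 = (a ^ 2 + c ^ 2 - (b ^ 2 + d ^ 2)) ^ 2 + 4 * (a * b + c * d) ^ 2 := by
    rw [mul_pow, hP, hQ]; ring
  have hσ : σ ^ 2 = (a ^ 2 + c ^ 2 + (b ^ 2 + d ^ 2)) / 2 + P * Q / 2 := by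
    linear_combination hP / 4 + hQ / 4
  have hPQ_nonneg : 0 ≤ P * Q := by positivity
  have hu : a ^ 2 + c ^ 2 ≤ σ ^ 2 := by nlinarith [sq_nonneg (a * b + c * d)]
  have hv : b ^ 2 + d ^ 2 ≤ σ ^ 2 := by nlinarith [sq_nonneg (a * b + c * d)]
  have hroot : (σ ^ 2 - (a ^ 2 + c ^ 2)) * (σ ^ 2 - (b ^ 2 + d ^ 2)) = (a * b + c * d) ^ 2 := by
    rw [hσ]; linear_combination hPQ / 4
  have hσ_nonneg : 0 ≤ σ := by positivity
  have hle (x : EuclideanSpace ℝ (Fin 2)) :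
      ‖toEuclideanCLM (𝕜 := ℝ) !![a, b; c, d] x‖ ≤ σ * ‖x‖ := by
    refine (pow_le_pow_iff_left₀ (norm_nonneg _) (by positivity) two_ne_zero).1 ?_
    rw [mul_pow, norm_toEuclideanCLM_fin_two_sq, EuclideanSpace.norm_sq_fin_two]
    exact quadratic_form_le_of_larger_root hu hv hroot _ _
  obtain ⟨x, y, hxy, heq⟩ := exists_quadratic_form_eq_of_larger_root hroot
  refine ContinuousLinearMap.opNorm_eq_of_norm_apply_eq hσ_nonneg hle
    (x := WithLp.toLp 2 ![x, y]) ?_ ?_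
  · intro h0
    apply hxy
    simpa using congr_arg (fun v : EuclideanSpace ℝ (Fin 2) => (v 0, v 1)) h0
  · refine (sq_eq_sq₀ (norm_nonneg _) (by positivity)).1 ?_
    rw [mul_pow, norm_toEuclideanCLM_fin_two_sq, EuclideanSpace.norm_sq_fin_two]
    simpa using heq

lemma opNorm_smul (r : ℝ) (A : Matrix (Fin 2) (Fin 2) ℝ) : opNorm (r • A) = |r| * opNorm A := by
  simp [opNorm, norm_smul]

lemma opNorm_adjugate_fin_two (a b c d : ℝ) : opNorm !![d, -b; -c, a] = opNorm !![a, b; c, d] := by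
  simp only [opNorm_fin_two]
  ring_nf

lemma inv_abs_inv_mul_add_div_two {p q Δ : ℝ} (hp : 0 ≤ p) (hq : 0 ≤ q) (hΔ : Δ ≠ 0)
    (h : p ^ 2 - q ^ 2 = 4 * Δ) : (|Δ⁻¹| * ((p + q) / 2))⁻¹ = |(p - q) / 2| := by
  have hpq : 0 < p + q := by
    refine (add_nonneg hp hq).lt_of_ne fun h0 => hΔ ?_
    nlinarith
  have key : |p - q| * (p + q) = 4 * |Δ| := by
    rw [← abs_of_pos hpq, ← abs_mul, show (p - q) * (p + q) = 4 * Δ by linear_combination h,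
      abs_mul, abs_of_pos four_pos]
  rw [abs_inv, abs_div, abs_two]
  field_simp
  linarith

theorem stmt1 (a b c d : ℝ) (h : IsUnit (!![a, b; c, d])) :
    (opNorm (!![a, b; c, d])⁻¹)⁻¹ =
      |(Real.sqrt ((a + d) ^ 2 + (c - b) ^ 2) - Real.sqrt ((a - d) ^ 2 + (b + c) ^ 2)) / 2| := by
  have hdet : a * d - b * c ≠ 0 := by
    simpa [det_fin_two_of] using ((isUnit_iff_isUnit_det _).1 h).ne_zero
  rw [inv_def, adjugate_fin_two_of, det_fin_two_of, Ring.inverse_eq_inv, opNorm_smul,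
    opNorm_adjugate_fin_two, opNorm_fin_two]
  exact inv_abs_inv_mul_add_div_two (Real.sqrt_nonneg _) (Real.sqrt_nonneg _) hdet
    (by rw [Real.sq_sqrt (by positivity), Real.sq_sqrt (by positivity)]; ring)
end

section
/- With AC and AS as above, define AT(x) = (AC(x) − 1)/AS(x). Then x ↦ x + AT(x) is strictly increasing on (−1, 1] and is a bijection from (−1, 1] to (−1, 1]. -/
open Real Set Filter Topology

theorem StrictAntiOn.bijOn_Ico {α δ : Type*} [ConditionallyCompleteLinearOrder α]
    [TopologicalSpace α] [OrderTopology α] [DenselyOrdered α] [LinearOrder δ]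
    [TopologicalSpace δ] [OrderClosedTopology δ] {f : α → δ} {a b : α} (hab : a ≤ b)
    (hf : StrictAntiOn f (Icc a b)) (hc : ContinuousOn f (Icc a b)) :
    BijOn f (Ico a b) (Ioc (f b) (f a)) := by
  refine ⟨fun x hx => ⟨?_, ?_⟩, (hf.mono Ico_subset_Icc_self).injOn, fun y hy => ?_⟩
  · exact hf (Ico_subset_Icc_self hx) (right_mem_Icc.2 hab) hx.2
  · exact hf.antitoneOn (left_mem_Icc.2 hab) (Ico_subset_Icc_self hx) hx.1
  · obtain ⟨x, hx, rfl⟩ := intermediate_value_Icc' hab hc (Ioc_subset_Icc_self hy)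
    exact ⟨x, ⟨hx.1, hx.2.lt_of_ne (by rintro rfl; exact hy.1.false)⟩, rfl⟩

namespace Real

theorem cos_le_one_sub_sq_div_two_add {x : ℝ} (hx : 0 ≤ x) :
    cos x ≤ 1 - x ^ 2 / 2 + x ^ 4 / 24 := by
  have hmono : MonotoneOn (fun t => 1 - t ^ 2 / 2 + t ^ 4 / 24 - cos t) (Ici 0) := by
    refine monotoneOn_of_deriv_nonneg (convex_Ici 0) (by fun_prop) (by fun_prop) fun t ht => ?_
    rw [interior_Ici] at ht
    have hderiv : HasDerivAt (fun t => 1 - t ^ 2 / 2 + t ^ 4 / 24 - cos t)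
        (-t + t ^ 3 / 6 + sin t) t := by
      refine ((((hasDerivAt_const t 1).sub ((hasDerivAt_pow 2 t).div_const 2)).add
        ((hasDerivAt_pow 4 t).div_const 24)).sub (hasDerivAt_cos t)).congr_deriv ?_
      push_cast; ring
    rw [hderiv.deriv]
    linarith [sin_ge_sub_cube (le_of_lt ht)]
  simpa using hmono self_mem_Ici hx hx

theorem sin_le_sub_cube_div_six_add {x : ℝ} (hx : 0 ≤ x) :
    sin x ≤ x - x ^ 3 / 6 + x ^ 5 / 120 := by
  have hmono : MonotoneOn (fun t => t - t ^ 3 / 6 + t ^ 5 / 120 - sin t) (Ici 0) := by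
    refine monotoneOn_of_deriv_nonneg (convex_Ici 0) (by fun_prop) (by fun_prop) fun t ht => ?_
    rw [interior_Ici] at ht
    have hderiv : HasDerivAt (fun t => t - t ^ 3 / 6 + t ^ 5 / 120 - sin t)
        (1 - t ^ 2 / 2 + t ^ 4 / 24 - cos t) t := by
      refine ((((hasDerivAt_id t).sub ((hasDerivAt_pow 3 t).div_const 6)).add
        ((hasDerivAt_pow 5 t).div_const 120)).sub (hasDerivAt_sin t)).congr_deriv ?_
      push_cast; ring
    rw [hderiv.deriv]
    linarith [cos_le_one_sub_sq_div_two_add (le_of_lt ht)]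
  simpa using hmono self_mem_Ici hx hx

theorem mul_cos_le_sin {x : ℝ} (hx₀ : 0 ≤ x) (hx : x ≤ π / 2) : x * cos x ≤ sin x := by
  rcases hx.lt_or_eq with hx | rfl
  · have hcos : 0 < cos x := cos_pos_of_mem_Ioo ⟨by linarith [pi_pos], hx⟩
    have := le_tan hx₀ hx
    rwa [tan_eq_sin_div_cos, le_div_iff₀ hcos] at this
  · simp

end Real

section

variable {θ : ℝ}

theorem add_sin_pos (h₀ : 0 < θ) : 0 < θ + sin θ := by
  linarith [(abs_lt.1 ((abs_sin_lt_abs h₀.ne').trans_eq (abs_of_pos h₀))).1]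

theorem sub_sin_div_add_sin_pos (h₀ : 0 < θ) : 0 < (θ - sin θ) / (θ + sin θ) :=
  div_pos (sub_pos.2 (sin_lt h₀)) (add_sin_pos h₀)

theorem cos_lt_one_of_pos_of_lt_pi (h₀ : 0 < θ) (hπ : θ < π) : cos θ < 1 :=
  arccos_pos.1 (by rwa [arccos_cos h₀.le hπ.le])

theorem sq_two_mul_cos_mul_sub_sin_le (h₀ : 0 ≤ θ) (h : θ ≤ π / 2) :
    (2 * θ * cos θ) ^ 2 * (θ - sin θ) ≤ sin θ ^ 2 * (θ + sin θ) ^ 3 := by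
  have hc : 0 ≤ cos θ := cos_nonneg_of_mem_Icc ⟨by linarith [pi_pos], h⟩
  have hs : 0 ≤ sin θ := sin_nonneg_of_nonneg_of_le_pi h₀ (by linarith [pi_pos])
  have hθc : (θ * cos θ) ^ 2 ≤ sin θ ^ 2 :=
    pow_le_pow_left₀ (mul_nonneg h₀ hc) (mul_cos_le_sin h₀ h) 2
  have hsub : 4 * (θ - sin θ) ≤ (θ + sin θ) ^ 3 := by
    nlinarith [sin_ge_sub_cube h₀, pow_nonneg h₀ 3,
      pow_le_pow_left₀ h₀ (le_add_of_nonneg_right hs : θ ≤ θ + sin θ) 3]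
  calc (2 * θ * cos θ) ^ 2 * (θ - sin θ) = (θ * cos θ) ^ 2 * (4 * (θ - sin θ)) := by ring
    _ ≤ sin θ ^ 2 * (θ + sin θ) ^ 3 :=
      mul_le_mul hθc hsub (by linarith [sin_le h₀]) (sq_nonneg _)

theorem sq_two_mul_sin_mul_one_sub_cos_lt (h₀ : 0 < θ) (h : θ ≤ π / 2) :
    (2 * sin θ * (1 - cos θ)) ^ 2 < (θ + sin θ) ^ 3 * (θ - sin θ) := by
  have hs : 0 < sin θ := sin_pos_of_pos_of_lt_pi h₀ (by linarith [pi_pos])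
  have hsθ : sin θ ≤ θ := sin_le h₀.le
  have hθ2 : θ ≤ 2 := by linarith [pi_le_four]
  have hcos : 0 ≤ 1 - cos θ := sub_nonneg.2 (cos_le_one θ)
  have hcos' : 1 - cos θ ≤ θ ^ 2 / 2 := by linarith [one_sub_sq_div_two_le_cos (x := θ)]
  have hsub : θ ^ 3 < 8 * (θ - sin θ) := by
    have hθsq : θ ^ 2 ≤ 4 := by nlinarith
    nlinarith [sin_le_sub_cube_div_six_add h₀.le, mul_le_mul_of_nonneg_left hθsq (pow_pos h₀ 3).le,
      pow_pos h₀ 3]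
  have hcube : 8 * sin θ ^ 2 * θ ≤ (θ + sin θ) ^ 3 := by
    nlinarith [mul_nonneg (sub_nonneg.2 hsθ) (sq_nonneg (θ - sin θ)),
      mul_nonneg hs.le (sub_nonneg.2 hsθ)]
  calc (2 * sin θ * (1 - cos θ)) ^ 2 ≤ (2 * sin θ * (θ ^ 2 / 2)) ^ 2 := by gcongr
    _ = 8 * sin θ ^ 2 * θ * θ ^ 3 / 8 := by ring
    _ < (θ + sin θ) ^ 3 * (8 * (θ - sin θ)) / 8 := by
      gcongr ?_ / 8
      exact mul_lt_mul' hcube hsub (by positivity) (by positivity)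
    _ = _ := by ring

theorem sq_two_mul_sin_lt (h : π / 2 ≤ θ) (hπ : θ ≤ π) :
    (2 * sin θ) ^ 2 < (θ + sin θ) ^ 3 * (θ - sin θ) := by
  have hθ : 3 / 2 ≤ θ := by linarith [pi_gt_three]
  have hs : 0 ≤ sin θ := sin_nonneg_of_nonneg_of_le_pi (by linarith) hπ
  have hs1 : sin θ ≤ 1 := sin_le_one θ
  have hcube : 8 * sin θ ^ 2 < (3 / 2 + sin θ) ^ 3 := by
    nlinarith [mul_nonneg hs hs, mul_nonneg (mul_nonneg hs hs) (sub_nonneg.2 hs1)]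
  calc (2 * sin θ) ^ 2 = 8 * sin θ ^ 2 * (1 / 2) := by ring
    _ < (3 / 2 + sin θ) ^ 3 * (1 / 2) := by gcongr
    _ ≤ (θ + sin θ) ^ 3 * (θ - sin θ) := by gcongr; linarith

theorem cos_mul_mul_sub_sin_add_sin_sq_mul_lt (h₀ : 0 < θ) (hπ : θ < π) :
    cos θ * θ * (θ - sin θ) + sin θ ^ 2 * (1 - cos θ) <
      sin θ * ((θ + sin θ) ^ 2 * √((θ - sin θ) / (θ + sin θ))) := by
  have hs : 0 < sin θ := sin_pos_of_pos_of_lt_pi h₀ hπ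
  have hsθ : sin θ < θ := sin_lt h₀
  set R := (θ + sin θ) ^ 2 * √((θ - sin θ) / (θ + sin θ))
  have hR : 0 ≤ R := by positivity
  have hR2 : R ^ 2 = (θ + sin θ) ^ 3 * (θ - sin θ) := by
    rw [mul_pow, sq_sqrt (sub_sin_div_add_sin_pos h₀).le]
    field_simp
  rcases le_or_gt θ (π / 2) with h | h
  · have hA : 2 * θ * cos θ * (θ - sin θ) ≤ sin θ * R := by
      refine (abs_le_of_sq_le_sq ?_ (by positivity)).trans' (le_abs_self _)
      calc (2 * θ * cos θ * (θ - sin θ)) ^ 2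
          = (2 * θ * cos θ) ^ 2 * (θ - sin θ) * (θ - sin θ) := by ring
        _ ≤ sin θ ^ 2 * (θ + sin θ) ^ 3 * (θ - sin θ) :=
          mul_le_mul_of_nonneg_right (sq_two_mul_cos_mul_sub_sin_le h₀.le h) (by linarith)
        _ = (sin θ * R) ^ 2 := by rw [mul_pow, hR2]; ring
    have hB : 2 * sin θ * (1 - cos θ) < R :=
      lt_of_pow_lt_pow_left₀ 2 hR (hR2 ▸ sq_two_mul_sin_mul_one_sub_cos_lt h₀ h)
    nlinarith [mul_lt_mul_of_pos_left hB hs]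
  · have hc : cos θ < 0 := cos_neg_of_pi_div_two_lt_of_lt h (by linarith)
    have hB : 2 * sin θ < R := lt_of_pow_lt_pow_left₀ 2 hR (hR2 ▸ sq_two_mul_sin_lt h.le hπ.le)
    nlinarith [neg_one_le_cos θ, mul_lt_mul_of_pos_left hB hs, mul_pos h₀ (sub_pos.2 hsθ)]

noncomputable def cosAddAT (θ : ℝ) : ℝ := cos θ + sin θ * √((θ - sin θ) / (θ + sin θ))

theorem hasDerivAt_cosAddAT (h₀ : 0 < θ) :
    HasDerivAt cosAddAT
      (-sin θ + (cos θ * √((θ - sin θ) / (θ + sin θ)) + sin θ * ((sin θ - θ * cos θ) /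
        ((θ + sin θ) ^ 2 * √((θ - sin θ) / (θ + sin θ)))))) θ := by
  have hratio : HasDerivAt (fun t => (t - sin t) / (t + sin t))
      (2 * (sin θ - θ * cos θ) / (θ + sin θ) ^ 2) θ := by
    refine (((hasDerivAt_id θ).sub (hasDerivAt_sin θ)).div ((hasDerivAt_id θ).add
      (hasDerivAt_sin θ)) (add_sin_pos h₀).ne').congr_deriv ?_
    simp only [Pi.add_apply, Pi.sub_apply, id_eq]
    ring
  have hsqrt := hratio.sqrt (sub_sin_div_add_sin_pos h₀).ne'
  refine ((hasDerivAt_cos θ).add ((hasDerivAt_sin θ).mul hsqrt)).congr_deriv ?_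
  field_simp

theorem cosAddAT_zero : cosAddAT 0 = 1 := by simp [cosAddAT]

theorem cosAddAT_pi : cosAddAT π = -1 := by simp [cosAddAT]

theorem deriv_cosAddAT_neg (h₀ : 0 < θ) (hπ : θ < π) : deriv cosAddAT θ < 0 := by
  rw [(hasDerivAt_cosAddAT h₀).deriv]
  have hsum := add_sin_pos h₀
  have key := cos_mul_mul_sub_sin_add_sin_sq_mul_lt h₀ hπ
  set ρ := √((θ - sin θ) / (θ + sin θ))
  have hρ : 0 < ρ := sqrt_pos.2 (sub_sin_div_add_sin_pos h₀)
  have hρ2 : ρ ^ 2 = (θ - sin θ) / (θ + sin θ) := sq_sqrt (sub_sin_div_add_sin_pos h₀).le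
  have hform : -sin θ + (cos θ * ρ + sin θ * ((sin θ - θ * cos θ) / ((θ + sin θ) ^ 2 * ρ))) =
      (cos θ * θ * (θ - sin θ) + sin θ ^ 2 * (1 - cos θ) - sin θ * ((θ + sin θ) ^ 2 * ρ)) /
        ((θ + sin θ) ^ 2 * ρ) := by
    field_simp
    rw [hρ2]
    field_simp
    ring
  rw [hform]
  exact div_neg_of_neg_of_pos (by linarith) (by positivity)

theorem continuousOn_cosAddAT : ContinuousOn cosAddAT (Icc 0 π) := by
  intro θ hθ
  rcases hθ.1.eq_or_lt with rfl | h₀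
  · have hbound : ∀ t ∈ Icc 0 π, ‖sin t * √((t - sin t) / (t + sin t))‖ ≤ |sin t| := by
      intro t ht
      have hs : 0 ≤ sin t := sin_nonneg_of_nonneg_of_le_pi ht.1 ht.2
      rw [norm_mul, Real.norm_eq_abs, Real.norm_of_nonneg (sqrt_nonneg _)]
      exact mul_le_of_le_one_right (abs_nonneg _)
        (sqrt_le_one.2 (div_le_one_of_le₀ (by linarith) (by linarith [ht.1])))
    have hsmall : Tendsto (fun t => sin t * √((t - sin t) / (t + sin t))) (𝓝[Icc 0 π] 0) (𝓝 0) :=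
      squeeze_zero_norm' (eventually_nhdsWithin_of_forall hbound)
        (by simpa using (continuous_sin.abs.tendsto 0).mono_left nhdsWithin_le_nhds)
    have h := ((continuous_cos.tendsto 0).mono_left nhdsWithin_le_nhds).add hsmall
    rw [cos_zero, add_zero] at h
    rwa [ContinuousWithinAt, cosAddAT_zero]
  · exact (hasDerivAt_cosAddAT h₀).continuousAt.continuousWithinAt

theorem strictAntiOn_cosAddAT : StrictAntiOn cosAddAT (Icc 0 π) :=
  strictAntiOn_of_deriv_neg (convex_Icc 0 π) continuousOn_cosAddAT fun _ hθ => by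
    rw [interior_Icc] at hθ
    exact deriv_cosAddAT_neg hθ.1 hθ.2

theorem AC_cos (h₀ : 0 < θ) (hπ : θ < π) : AC (cos θ) = θ / sin θ := by
  have hsin : √(1 - cos θ ^ 2) = sin θ := by
    rw [← sin_arccos, arccos_cos h₀.le hπ.le]
  rw [AC, if_pos (cos_lt_one_of_pos_of_lt_pi h₀ hπ), hsin, arccos_cos h₀.le hπ.le]

theorem AT_cos (h₀ : 0 < θ) (hπ : θ < π) :
    AT (cos θ) = sin θ * √((θ - sin θ) / (θ + sin θ)) := by
  have hs : 0 < sin θ := sin_pos_of_pos_of_lt_pi h₀ hπ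
  have hdiff : 0 < θ - sin θ := sub_pos.2 (sin_lt h₀)
  set ρ := √((θ - sin θ) / (θ + sin θ))
  have hρ : 0 < ρ := sqrt_pos.2 (sub_sin_div_add_sin_pos h₀)
  have hρ2 : ρ ^ 2 = (θ - sin θ) / (θ + sin θ) := sq_sqrt (sub_sin_div_add_sin_pos h₀).le
  have hAS : AS (cos θ) = (θ - sin θ) / (sin θ ^ 2 * ρ) := by
    rw [AS, if_neg (cos_lt_one_of_pos_of_lt_pi h₀ hπ).ne, AC_cos h₀ hπ,
      ← sqrt_sq (by positivity : 0 ≤ (θ - sin θ) / (sin θ ^ 2 * ρ))]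
    congr 1
    simp only [div_pow, mul_pow, hρ2, ← sin_sq]
    field_simp
    ring
  rw [AT, AC_cos h₀ hπ, hAS]
  field_simp

theorem cos_add_AT_cos (h₀ : 0 ≤ θ) (hπ : θ < π) : cos θ + AT (cos θ) = cosAddAT θ := by
  rcases h₀.eq_or_lt with rfl | h₀
  · simp [AT, AC, cosAddAT]
  · rw [AT_cos h₀ hπ, cosAddAT]

end

theorem stmt7 :
    StrictMonoOn (fun x => x + AT x) (Set.Ioc (-1 : ℝ) 1) ∧
    Set.BijOn (fun x => x + AT x) (Set.Ioc (-1 : ℝ) 1) (Set.Ioc (-1 : ℝ) 1) := by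
  have hcos : BijOn cos (Ico 0 π) (Ioc (-1) 1) := by
    simpa using strictAntiOn_cos.bijOn_Ico pi_pos.le continuous_cos.continuousOn
  have harccos : BijOn arccos (Ioc (-1) 1) (Ico 0 π) :=
    hcos.symm ⟨fun x hx => cos_arccos hx.1.le hx.2, fun θ hθ => arccos_cos hθ.1 hθ.2.le⟩
  have hG : BijOn cosAddAT (Ico 0 π) (Ioc (-1) 1) := by
    simpa [cosAddAT_zero, cosAddAT_pi] using
      strictAntiOn_cosAddAT.bijOn_Ico pi_pos.le continuousOn_cosAddAT
  have hEq : EqOn (cosAddAT ∘ arccos) (fun x => x + AT x) (Ioc (-1) 1) := fun x hx => by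
    rw [Function.comp_apply, ← cos_add_AT_cos (arccos_nonneg x) (arccos_lt_pi.2 hx.1),
      cos_arccos hx.1.le hx.2]
  refine ⟨?_, (hG.comp harccos).congr hEq⟩
  exact (strictAntiOn_cosAddAT.comp (strictAntiOn_arccos.mono Ioc_subset_Icc_self)
    (harccos.mapsTo.mono_right Ico_subset_Icc_self)).congr hEq
end

section
/- Let A be a real 2×2 matrix whose spectrum (as a complex matrix) is disjoint from (−∞, 0]. Then det A > 0, tr A / (2√(det A)) > −1, and log A = (log det A)/2 · I + (AC(tr A/(2√det A))/√det A) · (A − (tr A)/2 · I), where log A is the principal logarithm. -/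
/-! Write `t = tr A / 2`, `d = det A` and `B = A - t`; Cayley–Hamilton gives `B² = t² - d`.
Since the real eigenvalues `t ± √(t² - d)`, if any, are positive, `d > 0` and `x = t / √d > -1`,
so `x = cos θ` with `0 < θ < π`, or `x = 1`, or `x = cosh r` with `r > 0`. Then `γ = AC x / √d`
makes `(γB)² = u` with `u = -θ²`, `0`, `r²`, and splitting the exponential series into even and
odd parts gives `exp (γB) = x + γB / AC x`, so `exp L = √d · exp (γB) = t + B = A`. The eigenvalues
`(log d)/2 ± √u` of `L` have imaginary part `0` or `±θ`, inside `(-π, π)`. -/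

open scoped Nat

namespace Real

lemma hasSum_cos_of_sq (θ : ℝ) :
    HasSum (fun k : ℕ => (-θ ^ 2) ^ k / (2 * k)!) (cos θ) := by
  convert hasSum_cos θ using 2 with k
  rw [neg_pow, pow_mul]

lemma hasSum_sin_div_of_sq {θ : ℝ} (hθ : θ ≠ 0) :
    HasSum (fun k : ℕ => (-θ ^ 2) ^ k / (2 * k + 1)!) (sin θ / θ) := by
  refine ((hasSum_sin θ).div_const θ).congr_fun fun k => ?_
  rw [neg_pow, pow_succ θ (2 * k), pow_mul]
  field_simp

lemma hasSum_cosh_of_sq (r : ℝ) :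
    HasSum (fun k : ℕ => (r ^ 2) ^ k / (2 * k)!) (cosh r) := by
  convert hasSum_cosh r using 2 with k
  rw [pow_mul]

lemma hasSum_sinh_div_of_sq {r : ℝ} (hr : r ≠ 0) :
    HasSum (fun k : ℕ => (r ^ 2) ^ k / (2 * k + 1)!) (sinh r / r) := by
  refine ((hasSum_sinh r).div_const r).congr_fun fun k => ?_
  rw [pow_succ r (2 * k), pow_mul]
  field_simp

end Real

lemma AC_cos_s8 {θ : ℝ} (hθ : 0 < θ) (hθπ : θ < Real.pi) : AC (Real.cos θ) = θ / Real.sin θ := by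
  have hcos : Real.arccos (Real.cos θ) = θ := Real.arccos_cos hθ.le hθπ.le
  have hlt : Real.cos θ < 1 := Real.arccos_pos.mp (hcos.symm ▸ hθ)
  rw [AC, if_pos hlt, ← Real.sin_arccos, hcos]

lemma AC_one : AC 1 = 1 := by
  rw [AC, if_neg (lt_irrefl 1), if_pos rfl]

lemma AC_cosh {r : ℝ} (hr : 0 < r) : AC (Real.cosh r) = r / Real.sinh r := by
  have hlt : 1 < Real.cosh r := Real.one_lt_cosh.mpr hr.ne'
  rw [AC, if_neg hlt.not_gt, if_neg hlt.ne', ← Real.sinh_arcosh hlt.le]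
  exact congrArg (fun y => y / Real.sinh y) (Real.arcosh_cosh hr.le)

lemma exists_eq_cos_or_eq_one_or_eq_cosh {x : ℝ} (hx : -1 < x) :
    (∃ θ, 0 < θ ∧ θ < Real.pi ∧ Real.cos θ = x) ∨ x = 1 ∨ ∃ r, 0 < r ∧ Real.cosh r = x := by
  rcases lt_trichotomy x 1 with hx1 | rfl | hx1
  · exact .inl ⟨_, Real.arccos_pos.mpr hx1, Real.arccos_lt_pi.mpr hx, Real.cos_arccos hx.le hx1.le⟩
  · exact .inr (.inl rfl)
  · exact .inr (.inr ⟨_, Real.arcosh_pos hx1, Real.cosh_arcosh hx1.le⟩)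

lemma AC_pos {x : ℝ} (hx : -1 < x) : 0 < AC x := by
  rcases exists_eq_cos_or_eq_one_or_eq_cosh hx with ⟨θ, hθ, hθπ, rfl⟩ | rfl | ⟨r, hr, rfl⟩
  · rw [AC_cos_s8 hθ hθπ]
    exact div_pos hθ (Real.sin_pos_of_pos_of_lt_pi hθ hθπ)
  · rw [AC_one]
    exact one_pos
  · rw [AC_cosh hr]
    exact div_pos hr (Real.sinh_pos_iff.mpr hr)

lemma hasSum_AC {x : ℝ} (hx : -1 < x) :
    HasSum (fun k : ℕ => (AC x ^ 2 * (x ^ 2 - 1)) ^ k / (2 * k)!) x ∧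
      HasSum (fun k : ℕ => (AC x ^ 2 * (x ^ 2 - 1)) ^ k / (2 * k + 1)!) (AC x)⁻¹ ∧
      -Real.pi ^ 2 < AC x ^ 2 * (x ^ 2 - 1) := by
  rcases exists_eq_cos_or_eq_one_or_eq_cosh hx with ⟨θ, hθ, hθπ, rfl⟩ | rfl | ⟨r, hr, rfl⟩
  · have hsin : Real.sin θ ≠ 0 := (Real.sin_pos_of_pos_of_lt_pi hθ hθπ).ne'
    have hu : AC (Real.cos θ) ^ 2 * (Real.cos θ ^ 2 - 1) = -θ ^ 2 := by
      rw [AC_cos_s8 hθ hθπ, ← Real.sin_sq_add_cos_sq θ]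
      field_simp
      ring
    rw [hu, AC_cos_s8 hθ hθπ, inv_div]
    exact ⟨Real.hasSum_cos_of_sq θ, Real.hasSum_sin_div_of_sq hθ.ne', by nlinarith⟩
  · have hu : AC 1 ^ 2 * (1 ^ 2 - 1 : ℝ) = 0 := by ring
    rw [hu, AC_one, inv_one]
    refine ⟨?_, ?_, by nlinarith [Real.pi_pos]⟩ <;>
    · convert hasSum_ite_eq 0 (1 : ℝ) using 2 with k
      rcases eq_or_ne k 0 with rfl | hk
      · simp
      · simp [hk]
  · have hsinh : Real.sinh r ≠ 0 := (Real.sinh_pos_iff.mpr hr).ne'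
    have hu : AC (Real.cosh r) ^ 2 * (Real.cosh r ^ 2 - 1) = r ^ 2 := by
      rw [AC_cosh hr, Real.cosh_sq, add_sub_cancel_right]
      field_simp
    rw [hu, AC_cosh hr, inv_div]
    exact ⟨Real.hasSum_cosh_of_sq r, Real.hasSum_sinh_div_of_sq hr.ne', by nlinarith [Real.pi_pos]⟩

section exp

open NormedSpace

variable {𝔸 : Type*} [Ring 𝔸] [Algebra ℝ 𝔸] [TopologicalSpace 𝔸] [IsTopologicalRing 𝔸]
  [ContinuousSMul ℝ 𝔸] [T2Space 𝔸]

lemma NormedSpace.exp_smul_one (α : ℝ) : exp (α • (1 : 𝔸)) = Real.exp α • 1 := by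
  rw [exp_eq_tsum ℝ, Real.exp_eq_exp_ℝ]
  refine (((expSeries_div_hasSum_exp α).smul_const (1 : 𝔸)).congr_fun fun n => ?_).tsum_eq
  rw [smul_pow, one_pow, smul_smul, div_eq_inv_mul]

lemma NormedSpace.exp_eq_of_mul_self_eq_smul_one {b : 𝔸} {Δ e o : ℝ} (hb : b * b = Δ • 1)
    (he : HasSum (fun k : ℕ => Δ ^ k / (2 * k)!) e)
    (ho : HasSum (fun k : ℕ => Δ ^ k / (2 * k + 1)!) o) :
    exp b = e • 1 + o • b := by
  have hpow (k : ℕ) : b ^ (2 * k) = Δ ^ k • (1 : 𝔸) := by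
    rw [pow_mul, sq, hb, smul_pow, one_pow]
  rw [exp_eq_tsum ℝ]
  refine (HasSum.even_add_odd ?_ ?_).tsum_eq
  · refine (he.smul_const (1 : 𝔸)).congr_fun fun k => ?_
    rw [hpow, smul_smul, div_eq_inv_mul]
  · refine (ho.smul_const b).congr_fun fun k => ?_
    rw [pow_succ, hpow, smul_mul_assoc, one_mul, smul_smul, div_eq_inv_mul]

end exp

lemma Matrix.exp_smul_one_add {m : Type*} [Fintype m] [DecidableEq m] (α : ℝ)
    (C : Matrix m m ℝ) : NormedSpace.exp (α • 1 + C) = Real.exp α • NormedSpace.exp C := by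
  rw [Matrix.exp_add_of_commute _ _ ((Commute.one_left C).smul_left α),
    NormedSpace.exp_smul_one, smul_one_mul]

namespace Matrix

variable (A : Matrix (Fin 2) (Fin 2) ℝ)

lemma mem_spectrum_map_ofReal_iff (z : ℂ) :
    z ∈ spectrum ℂ (A.map (fun x => (x : ℂ))) ↔ z ^ 2 - A.trace * z + A.det = 0 := by
  rw [spectrum.mem_iff, isUnit_iff_isUnit_det, isUnit_iff_ne_zero, not_not]
  constructor <;> intro hz <;> rw [← hz] <;>
    simp [det_fin_two, trace_fin_two, algebraMap_matrix_apply] <;> ring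

lemma sub_half_trace_mul_self :
    (A - (A.trace / 2) • 1) * (A - (A.trace / 2) • 1) = ((A.trace / 2) ^ 2 - A.det) • 1 := by
  ext i j
  fin_cases i <;> fin_cases j <;>
    simp [mul_apply, trace_fin_two, det_fin_two, one_apply] <;> ring

lemma mem_spectrum_smul_one_add_smul_sub_half_trace_iff (α γ : ℝ) (z : ℂ) :
    z ∈ spectrum ℂ ((α • 1 + γ • (A - (A.trace / 2) • 1)).map (fun x => (x : ℂ))) ↔
      (z - α) ^ 2 = (γ ^ 2 * ((A.trace / 2) ^ 2 - A.det) : ℝ) := by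
  have hpoly : z ^ 2 - (α • 1 + γ • (A - (A.trace / 2) • 1)).trace * z +
      (α • 1 + γ • (A - (A.trace / 2) • 1)).det =
        (z - α) ^ 2 - (γ ^ 2 * ((A.trace / 2) ^ 2 - A.det) : ℝ) := by
    simp [trace_fin_two, det_fin_two]
    ring
  rw [mem_spectrum_map_ofReal_iff, hpoly, sub_eq_zero]

end Matrix

lemma Complex.im_mem_Ioo_of_sq_eq_ofReal {w : ℂ} {u c : ℝ} (hw : w ^ 2 = u) (hc : 0 < c)
    (hu : -c ^ 2 < u) : w.im ∈ Set.Ioo (-c) c := by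
  have hre : w.re ^ 2 - w.im ^ 2 = u := by simpa [sq] using congrArg Complex.re hw
  have him : w.re * w.im = 0 := by
    have := congrArg Complex.im hw
    simp only [sq, Complex.mul_im, Complex.ofReal_im] at this
    linarith
  rw [Set.mem_Ioo, ← abs_lt]
  rcases mul_eq_zero.mp him with hre0 | him0
  · refine abs_lt_of_sq_lt_sq ?_ hc.le
    rw [hre0] at hre
    linarith
  · rw [him0, abs_zero]
    exact hc

namespace LogAble

variable {A : Matrix (Fin 2) (Fin 2) ℝ}

/-- When the eigenvalues `tr/2 ± √Δ` are real, the smaller one must be positive. -/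
lemma sqrt_disc_lt_half_trace (h : LogAble A) (hΔ : 0 ≤ (A.trace / 2) ^ 2 - A.det) :
    √((A.trace / 2) ^ 2 - A.det) < A.trace / 2 := by
  have hsq := Real.sq_sqrt hΔ
  have hmem : ((A.trace / 2 - √((A.trace / 2) ^ 2 - A.det) : ℝ) : ℂ) ∈
      spectrum ℂ (A.map (fun x => (x : ℂ))) := by
    rw [Matrix.mem_spectrum_map_ofReal_iff]
    exact_mod_cast (by linear_combination hsq :
      (A.trace / 2 - √((A.trace / 2) ^ 2 - A.det)) ^ 2 -
        A.trace * (A.trace / 2 - √((A.trace / 2) ^ 2 - A.det)) + A.det = 0)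
  have := h _ hmem
  simp only [Complex.ofReal_im, Complex.ofReal_re, true_and, not_le, sub_pos] at this
  exact this

lemma det_pos (h : LogAble A) : 0 < A.det := by
  by_cases hΔ : 0 ≤ (A.trace / 2) ^ 2 - A.det
  · nlinarith [h.sqrt_disc_lt_half_trace hΔ, Real.sq_sqrt hΔ,
      Real.sqrt_nonneg ((A.trace / 2) ^ 2 - A.det)]
  · nlinarith [sq_nonneg (A.trace / 2)]

lemma neg_one_lt (h : LogAble A) : -1 < A.trace / (2 * √A.det) := by
  have hs : 0 < √A.det := Real.sqrt_pos.mpr h.det_pos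
  rw [lt_div_iff₀ (by positivity)]
  by_cases hΔ : 0 ≤ (A.trace / 2) ^ 2 - A.det
  · nlinarith [h.sqrt_disc_lt_half_trace hΔ, Real.sqrt_nonneg ((A.trace / 2) ^ 2 - A.det)]
  · nlinarith [Real.sq_sqrt h.det_pos.le]

end LogAble

theorem stmt8 (A : Matrix (Fin 2) (Fin 2) ℝ) (h : LogAble A) :
    0 < A.det ∧
    -1 < A.trace / (2 * Real.sqrt A.det) ∧
    IsPrincipalLog A
      ((Real.log A.det / 2) • (1 : Matrix (Fin 2) (Fin 2) ℝ) +
        (AC (A.trace / (2 * Real.sqrt A.det)) / Real.sqrt A.det) •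
          (A - (A.trace / 2) • (1 : Matrix (Fin 2) (Fin 2) ℝ))) := by
  have hd := h.det_pos
  have hx := h.neg_one_lt
  set s := √A.det
  set x := A.trace / (2 * s)
  have hs : 0 < s := Real.sqrt_pos.mpr hd
  have hxs : s * x = A.trace / 2 := by
    simp only [x]
    field_simp
  have hu : (AC x / s) ^ 2 * ((A.trace / 2) ^ 2 - A.det) = AC x ^ 2 * (x ^ 2 - 1) := by
    rw [← hxs, ← Real.sq_sqrt hd.le]
    field_simp
    ring
  obtain ⟨heven, hodd, hu_gt⟩ := hasSum_AC hx
  refine ⟨hd, hx, ?_, fun z hz => ?_⟩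
  · have hB := A.sub_half_trace_mul_self
    rw [Matrix.exp_smul_one_add, NormedSpace.exp_eq_of_mul_self_eq_smul_one
      (by rw [smul_mul_smul_comm, hB, smul_smul, ← sq, hu]) heven hodd,
      ← Real.log_sqrt hd.le, Real.exp_log hs, smul_add, smul_smul, smul_smul, smul_smul, hxs,
      show s * (AC x)⁻¹ * (AC x / s) = 1 by field_simp [(AC_pos hx).ne'], one_smul]
    abel
  · rw [Matrix.mem_spectrum_smul_one_add_smul_sub_half_trace_iff, hu] at hz
    simpa using Complex.im_mem_Ioo_of_sq_eq_ofReal hz Real.pi_pos hu_gt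
end

section
/- For real 2×2 matrices A₁, A₂: PD(A₁) ⊆ PD(A₂) holds if and only if for all λ ∈ ℝ both ‖A₁ + λI‖₂ ≤ ‖A₂ + λI‖₂ and ⌊A₁ + λI⌋₂ ≥ ⌊A₂ + λI⌋₂. -/
/-!
Identify `ℝ²` with `ℂ`. A real `2 × 2` matrix then acts as `z ↦ α z + β z̄`, where `|α|` is the
modulus of the centre `c` of `PD(A)` and `|β|` is its radius `r`. By the triangle inequality,
and choosing `z` with `α z` and `β z̄` on the same ray, `‖A‖₂ = |α| + |β|`. Since
`det A = |α|² - |β|²` and `A⁻¹` has parts `ᾱ / det A` and `-β / det A`, also `⌊A⌋₂ = |α| - |β|`.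
Shifting by `λ I` shifts `c` by `λ` and keeps `r`, so the two families of inequalities say
`| |c₁ + λ| - |c₂ + λ| | ≤ r₂ - r₁` for all real `λ`. As both centres lie in the closed upper
half-plane, the supremum over `λ` of the left-hand side is `|c₁ - c₂|`: it is attained where
the line through `c₁` and `c₂` meets `ℝ`, or approached as `λ → ∞` when that line is
horizontal. Finally `|c₁ - c₂| + r₁ ≤ r₂` is the containment of the disks.
-/

open ComplexConjugate

theorem Real.sign_mul_abs (r : ℝ) : Real.sign r * |r| = r := by
  rcases lt_trichotomy r 0 with h | rfl | h
  · rw [Real.sign_of_neg h, abs_of_neg h, neg_one_mul, neg_neg]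
  · rw [abs_zero, mul_zero]
  · rw [Real.sign_of_pos h, abs_of_pos h, one_mul]

theorem closedBall_subset_closedBall_iff {E : Type*} [NormedAddCommGroup E] [NormedSpace ℝ E]
    [Nontrivial E] {x y : E} {r s : ℝ} (hr : 0 ≤ r) :
    Metric.closedBall x r ⊆ Metric.closedBall y s ↔ r + dist x y ≤ s := by
  refine ⟨fun h => ?_, Metric.closedBall_subset_closedBall'⟩
  obtain ⟨u, hu, hxy⟩ : ∃ u : E, ‖u‖ = 1 ∧ x - y = ‖x - y‖ • u := by
    obtain hxy | hxy := eq_or_ne (x - y) 0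
    · obtain ⟨u, hu⟩ := exists_norm_eq E zero_le_one
      exact ⟨u, hu, by simp [hxy]⟩
    · exact ⟨‖x - y‖⁻¹ • (x - y), norm_smul_inv_norm hxy,
        (smul_inv_smul₀ (norm_ne_zero_iff.mpr hxy) _).symm⟩
  have hfar := h (show x + r • u ∈ Metric.closedBall x r by
    simp [norm_smul, hu, abs_of_nonneg hr])
  rwa [Metric.mem_closedBall, dist_eq_norm, add_sub_right_comm, hxy, ← add_smul, norm_smul, hu,
    mul_one, Real.norm_of_nonneg (by positivity), add_comm, ← dist_eq_norm] at hfar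

namespace Complex

theorem exists_norm_mul_add_mul_conj_eq (α β : ℂ) :
    ∃ z : ℂ, z ≠ 0 ∧ ‖α * z + β * conj z‖ = (‖α‖ + ‖β‖) * ‖z‖ := by
  by_cases h : conj α * β = 0
  · refine ⟨1, one_ne_zero, ?_⟩
    rcases mul_eq_zero.mp h with hα | hβ
    · simp [(map_eq_zero _).mp hα]
    · simp [hβ]
  obtain ⟨z, hz⟩ := IsAlgClosed.exists_pow_nat_eq (conj α * β) two_pos
  have hz0 : z ≠ 0 := by rintro rfl; simp_all
  -- `‖z‖² α z = α z² z̄ = ‖α‖² β z̄`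
  have hray : α * z = ((‖α‖ / ‖z‖) ^ 2 : ℝ) • (β * conj z) := by
    have hz' : (‖z‖ : ℂ) ≠ 0 := by exact_mod_cast norm_ne_zero_iff.mpr hz0
    rw [real_smul]
    push_cast
    field_simp
    linear_combination (β * conj z) * conj_mul' α - α * mul_conj' z * z + (conj z * α) * hz
  refine ⟨z, hz0, ?_⟩
  rw [hray, (SameRay.sameRay_nonneg_smul_left _ (by positivity)).norm_add, ← hray]
  simp only [norm_mul, norm_conj]
  ring

theorem re_sub_le_of_forall_norm_add_ofReal_sub_le {z w : ℂ} {s : ℝ}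
    (h : ∀ x : ℝ, ‖w + x‖ - ‖z + x‖ ≤ s) : w.re - z.re ≤ s := by
  refine le_of_forall_pos_le_add fun ε hε => ?_
  -- far to the right, `‖z + x‖` exceeds `re (z + x)` by at most `ε`
  set R := z.im ^ 2 / (2 * ε)
  have hR : 0 ≤ R := by positivity
  have hz : ‖z + (R - z.re : ℝ)‖ ≤ R + ε := by
    rw [← pow_le_pow_iff_left₀ (norm_nonneg _) (by positivity) two_ne_zero, Complex.sq_norm,
      normSq_apply]
    simp only [add_re, ofReal_re, add_im, ofReal_im, add_zero]
    have : z.im ^ 2 = 2 * ε * R := (mul_div_cancel₀ _ (by positivity)).symm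
    nlinarith
  have hw := re_le_norm (w + (R - z.re : ℝ))
  simp only [add_re, ofReal_re] at hw
  linarith [h (R - z.re)]

theorem dist_le_of_forall_abs_norm_add_ofReal_sub_le {z w : ℂ} (hz : 0 ≤ z.im)
    (hw : 0 ≤ w.im) {s : ℝ} (h : ∀ x : ℝ, |‖z + x‖ - ‖w + x‖| ≤ s) : dist z w ≤ s := by
  wlog hzw : z.im ≤ w.im generalizing z w
  · rw [dist_comm]
    exact this hw hz (fun x => abs_sub_comm ‖z + x‖ ‖w + x‖ ▸ h x) (le_of_not_ge hzw)
  obtain heq | hlt := hzw.eq_or_lt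
  · rw [dist_of_im_eq heq, Real.dist_eq, abs_sub_le_iff]
    exact ⟨re_sub_le_of_forall_norm_add_ofReal_sub_le fun x => (abs_sub_le_iff.mp (h x)).1,
      re_sub_le_of_forall_norm_add_ofReal_sub_le fun x => (abs_sub_le_iff.mp (h x)).2⟩
  -- `-x₀` is where the line through `z` and `w` meets the real axis
  set t := z.im / w.im
  set x₀ := (z.im * w.re - w.im * z.re) / (w.im - z.im)
  have hw0 : 0 < w.im := hz.trans_lt hlt
  have ht0 : 0 ≤ t := by positivity
  have ht1 : t < 1 := (div_lt_one hw0).mpr hlt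
  have hline : z + x₀ = t * (w + x₀) := by
    have : w.im - z.im ≠ 0 := (sub_pos.mpr hlt).ne'
    apply Complex.ext <;>
      simp only [add_re, add_im, mul_re, mul_im, ofReal_re, ofReal_im, t, x₀] <;>
      field_simp <;> ring
  have hdist : dist z w = ‖w + x₀‖ - ‖z + x₀‖ := by
    have : z - w = (t - 1 : ℝ) * (w + x₀) := by push_cast; linear_combination hline
    rw [dist_eq_norm, this, hline, norm_mul, norm_mul, norm_real, norm_real,
      Real.norm_of_nonpos (by linarith), Real.norm_of_nonneg ht0]
    ring
  rw [hdist]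
  exact (abs_sub_le_iff.mp (h x₀)).2

theorem dist_le_iff_forall_abs_norm_add_ofReal_sub_le {z w : ℂ} (hz : 0 ≤ z.im)
    (hw : 0 ≤ w.im) {s : ℝ} : dist z w ≤ s ↔ ∀ x : ℝ, |‖z + x‖ - ‖w + x‖| ≤ s := by
  refine ⟨fun h x => ?_, dist_le_of_forall_abs_norm_add_ofReal_sub_le hz hw⟩
  calc |‖z + x‖ - ‖w + x‖| ≤ ‖(z + x) - (w + x)‖ := abs_norm_sub_norm_le _ _
    _ = dist z w := by rw [add_sub_add_right_eq_sub, dist_eq_norm]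
    _ ≤ s := h

end Complex

namespace Matrix

/-- Under `ℝ² ≅ ℂ`, `A z = A.complexLinearPart * z + A.conjLinearPart * conj z`. -/
noncomputable def complexLinearPart (A : Matrix (Fin 2) (Fin 2) ℝ) : ℂ :=
  ⟨(A 0 0 + A 1 1) / 2, (A 1 0 - A 0 1) / 2⟩

noncomputable def conjLinearPart (A : Matrix (Fin 2) (Fin 2) ℝ) : ℂ :=
  ⟨(A 0 0 - A 1 1) / 2, (A 0 1 + A 1 0) / 2⟩

theorem toEuclideanCLM_orthonormalBasisOneI_repr (A : Matrix (Fin 2) (Fin 2) ℝ) (z : ℂ) :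
    toEuclideanCLM (𝕜 := ℝ) A (Complex.orthonormalBasisOneI.repr z) =
      Complex.orthonormalBasisOneI.repr
        (A.complexLinearPart * z + A.conjLinearPart * conj z) := by
  ext i
  fin_cases i <;>
    simp [complexLinearPart, conjLinearPart, mulVec, dotProduct, Fin.sum_univ_two] <;> ring

theorem det_eq_norm_complexLinearPart_sq_sub (A : Matrix (Fin 2) (Fin 2) ℝ) :
    A.det = ‖A.complexLinearPart‖ ^ 2 - ‖A.conjLinearPart‖ ^ 2 := by
  rw [det_fin_two, Complex.sq_norm, Complex.sq_norm, complexLinearPart, conjLinearPart,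
    Complex.normSq_mk, Complex.normSq_mk]
  ring

theorem complexLinearPart_inv (A : Matrix (Fin 2) (Fin 2) ℝ) :
    A⁻¹.complexLinearPart = conj A.complexLinearPart * (A.det⁻¹ : ℝ) := by
  rw [inv_def, adjugate_fin_two, Ring.inverse_eq_inv']
  apply Complex.ext <;> simp [complexLinearPart] <;> ring

theorem conjLinearPart_inv (A : Matrix (Fin 2) (Fin 2) ℝ) :
    A⁻¹.conjLinearPart = -A.conjLinearPart * (A.det⁻¹ : ℝ) := by
  rw [inv_def, adjugate_fin_two, Ring.inverse_eq_inv']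
  apply Complex.ext <;> simp [conjLinearPart] <;> ring

end Matrix

theorem opNorm_eq_norm_complexLinearPart_add_norm_conjLinearPart
    (A : Matrix (Fin 2) (Fin 2) ℝ) :
    opNorm A = ‖A.complexLinearPart‖ + ‖A.conjLinearPart‖ := by
  set e := Complex.orthonormalBasisOneI.repr
  have hnorm (z : ℂ) : ‖Matrix.toEuclideanCLM (𝕜 := ℝ) A (e z)‖ =
      ‖A.complexLinearPart * z + A.conjLinearPart * conj z‖ := by
    rw [Matrix.toEuclideanCLM_orthonormalBasisOneI_repr, LinearIsometryEquiv.norm_map]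
  refine ContinuousLinearMap.opNorm_eq_of_bounds (by positivity) (fun x => ?_) fun N _ hN => ?_
  · rw [← e.apply_symm_apply x, hnorm, e.norm_map, add_mul]
    refine (norm_add_le _ _).trans_eq ?_
    simp only [norm_mul, Complex.norm_conj]
  · obtain ⟨z, hz0, hz⟩ :=
      Complex.exists_norm_mul_add_mul_conj_eq A.complexLinearPart A.conjLinearPart
    have hNz := hN (e z)
    rw [hnorm, hz, e.norm_map] at hNz
    exact le_of_mul_le_mul_right hNz (norm_pos_iff.mpr hz0)

theorem conorm_eq_norm_complexLinearPart_sub_norm_conjLinearPart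
    (A : Matrix (Fin 2) (Fin 2) ℝ) :
    conorm A = ‖A.complexLinearPart‖ - ‖A.conjLinearPart‖ := by
  have hinv : opNorm A⁻¹ = (‖A.complexLinearPart‖ + ‖A.conjLinearPart‖) * |A.det|⁻¹ := by
    rw [opNorm_eq_norm_complexLinearPart_add_norm_conjLinearPart, Matrix.complexLinearPart_inv,
      Matrix.conjLinearPart_inv]
    simp only [norm_mul, norm_neg, Complex.norm_conj, Complex.norm_real, Real.norm_eq_abs,
      abs_inv]
    ring
  rw [conorm, hinv, mul_inv, inv_inv, mul_left_comm, Real.sign_mul_abs,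
    Matrix.det_eq_norm_complexLinearPart_sq_sub]
  obtain h | h := eq_or_ne (‖A.complexLinearPart‖ + ‖A.conjLinearPart‖) 0
  · obtain ⟨hα, hβ⟩ := (add_eq_zero_iff_of_nonneg (norm_nonneg _) (norm_nonneg _)).mp h
    simp [hα, hβ]
  · rw [sq_sub_sq, inv_mul_cancel_left₀ h]

theorem norm_complexLinearPart_eq_norm_PDcenter (A : Matrix (Fin 2) (Fin 2) ℝ) :
    ‖A.complexLinearPart‖ = ‖PDcenter A‖ := by
  rw [Complex.norm_def, Complex.norm_def, Complex.normSq_apply, Complex.normSq_apply]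
  simp [Matrix.complexLinearPart, PDcenter, div_mul_div_comm, abs_mul_abs_self]

theorem norm_conjLinearPart_eq_PDradius (A : Matrix (Fin 2) (Fin 2) ℝ) :
    ‖A.conjLinearPart‖ = PDradius A := by
  rw [Matrix.conjLinearPart, PDradius, Complex.norm_def, Complex.normSq_mk]
  ring_nf

theorem PDradius_nonneg (A : Matrix (Fin 2) (Fin 2) ℝ) : 0 ≤ PDradius A :=
  Real.sqrt_nonneg _

theorem im_PDcenter_nonneg (A : Matrix (Fin 2) (Fin 2) ℝ) : 0 ≤ (PDcenter A).im := by
  simp only [PDcenter, Complex.add_im, Complex.ofReal_im, Complex.mul_im, Complex.ofReal_re,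
    Complex.I_re, Complex.I_im]
  positivity

theorem PDcenter_add_smul_one (A : Matrix (Fin 2) (Fin 2) ℝ) (lam : ℝ) :
    PDcenter (A + lam • 1) = PDcenter A + lam := by
  apply Complex.ext
  · simp [PDcenter]
    ring
  · simp [PDcenter]

theorem PDradius_add_smul_one (A : Matrix (Fin 2) (Fin 2) ℝ) (lam : ℝ) :
    PDradius (A + lam • 1) = PDradius A := by
  simp [PDradius]

theorem opNorm_eq_norm_PDcenter_add_PDradius (A : Matrix (Fin 2) (Fin 2) ℝ) :
    opNorm A = ‖PDcenter A‖ + PDradius A := by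
  rw [opNorm_eq_norm_complexLinearPart_add_norm_conjLinearPart,
    norm_complexLinearPart_eq_norm_PDcenter, norm_conjLinearPart_eq_PDradius]

theorem conorm_eq_norm_PDcenter_sub_PDradius (A : Matrix (Fin 2) (Fin 2) ℝ) :
    conorm A = ‖PDcenter A‖ - PDradius A := by
  rw [conorm_eq_norm_complexLinearPart_sub_norm_conjLinearPart,
    norm_complexLinearPart_eq_norm_PDcenter, norm_conjLinearPart_eq_PDradius]

theorem stmt11 (A₁ A₂ : Matrix (Fin 2) (Fin 2) ℝ) :
    PD A₁ ⊆ PD A₂ ↔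
      ∀ lam : ℝ,
        opNorm (A₁ + lam • (1 : Matrix (Fin 2) (Fin 2) ℝ)) ≤
            opNorm (A₂ + lam • (1 : Matrix (Fin 2) (Fin 2) ℝ)) ∧
        conorm (A₂ + lam • (1 : Matrix (Fin 2) (Fin 2) ℝ)) ≤
            conorm (A₁ + lam • (1 : Matrix (Fin 2) (Fin 2) ℝ)) := by
  rw [PD, PD, closedBall_subset_closedBall_iff (PDradius_nonneg A₁), ← le_sub_iff_add_le',
    Complex.dist_le_iff_forall_abs_norm_add_ofReal_sub_le (im_PDcenter_nonneg A₁)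
      (im_PDcenter_nonneg A₂)]
  simp only [opNorm_eq_norm_PDcenter_add_PDradius, conorm_eq_norm_PDcenter_sub_PDradius,
    PDcenter_add_smul_one, PDradius_add_smul_one, abs_sub_le_iff]
  refine forall_congr' fun lam => and_congr ?_ ?_ <;> constructor <;> intro h <;> linarith
end

section
/- For real a ≠ 0 and real b, the matrix-valued function A(θ) = R(bθ)·(C(a²θ²−b²θ²)·I + S(a²θ²−b²θ²)·(−bθ·Ĩ + aθ·K̃)), where R(w) = [[cos w, −sin w],[sin w, cos w]], Ĩ = [[0,−1],[1,0]], K̃ = [[0,1],[1,0]], C(x) = cosh√x (x≥0), cos√(−x) (x<0), and S(x) = sinh√x/√x (x>0), 1 (x=0), sin√(−x)/√(−x) (x<0), satisfies A(0) = I and A′(θ)·A(θ)⁻¹ = a·[[−sin 2bθ, cos 2bθ],[cos 2bθ, sin 2bθ]] for all θ ∈ ℝ. -/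
noncomputable def CC (x : ℝ) : ℝ :=
  if 0 ≤ x then Real.cosh (Real.sqrt x) else Real.cos (Real.sqrt (-x))

noncomputable def SS (x : ℝ) : ℝ :=
  if 0 < x then Real.sinh (Real.sqrt x) / Real.sqrt x
  else if x = 0 then 1
  else Real.sin (Real.sqrt (-x)) / Real.sqrt (-x)

/-!
Write `R w` for the rotation through `w`, `J = R (π/2)` and `N = -b J + a K̃ = !![0, a + b; a - b, 0]`.
Since `N² = (a² - b²) • 1`, the second factor `M θ = C((a²-b²)θ²) • 1 + θ S((a²-b²)θ²) • N` is
`exp (θ N)`: it satisfies `M' = N M`, and `det M = C² - (a²-b²) θ² S² = 1`. With `R(bθ)' = b J R(bθ)`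
the product rule gives `A' = (b J R + R N) M`, and `b J R + R N = a R K̃ = a R(2bθ) K̃ R`, because
`J` commutes with rotations and conjugating the reflection `K̃` by `R w` gives `R (2w) K̃`.
Hence `A' = a R(2bθ) K̃ A`, and `A` is invertible since `det A = 1`.
-/

open Matrix

lemma CC_sq_sub_mul_SS_sq (x : ℝ) : CC x ^ 2 - x * SS x ^ 2 = 1 := by
  rcases lt_trichotomy x 0 with hx | rfl | hx
  · have hsq : Real.sqrt (-x) ^ 2 = -x := Real.sq_sqrt (by linarith)
    have hpos : Real.sqrt (-x) ≠ 0 := (Real.sqrt_pos.mpr (by linarith)).ne'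
    simp only [CC, SS, if_neg hx.not_ge, if_neg hx.not_gt, if_neg hx.ne]
    field_simp
    nlinarith [Real.sin_sq_add_cos_sq (Real.sqrt (-x))]
  · simp [CC, SS]
  · have hsq : Real.sqrt x ^ 2 = x := Real.sq_sqrt hx.le
    have hpos : Real.sqrt x ≠ 0 := (Real.sqrt_pos.mpr hx).ne'
    simp only [CC, SS, if_pos hx.le, if_pos hx]
    field_simp
    linear_combination x * Real.cosh_sq_sub_sinh_sq (Real.sqrt x) +
      (Real.cosh (Real.sqrt x) ^ 2 - 1) * hsq

section Trigonometric

variable {k : ℝ}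

lemma CC_mul_sq_of_pos (hk : 0 < k) (t : ℝ) :
    CC (k * t ^ 2) = Real.cosh (Real.sqrt k * t) := by
  rw [CC, if_pos (by positivity), Real.sqrt_mul hk.le, Real.sqrt_sq_eq_abs,
    ← abs_of_nonneg (Real.sqrt_nonneg k), ← abs_mul, Real.cosh_abs, abs_of_nonneg (Real.sqrt_nonneg k)]

lemma CC_mul_sq_of_neg (hk : k < 0) (t : ℝ) :
    CC (k * t ^ 2) = Real.cos (Real.sqrt (-k) * t) := by
  rcases eq_or_ne t 0 with rfl | ht
  · simp [CC]
  have hneg : k * t ^ 2 < 0 := mul_neg_of_neg_of_pos hk (by positivity)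
  rw [CC, if_neg hneg.not_ge, show -(k * t ^ 2) = -k * t ^ 2 by ring,
    Real.sqrt_mul (by linarith), Real.sqrt_sq_eq_abs,
    ← abs_of_nonneg (Real.sqrt_nonneg (-k)), ← abs_mul, Real.cos_abs,
    abs_of_nonneg (Real.sqrt_nonneg (-k))]

lemma mul_SS_mul_sq_of_pos (hk : 0 < k) (t : ℝ) :
    t * SS (k * t ^ 2) = Real.sinh (Real.sqrt k * t) / Real.sqrt k := by
  have hc : 0 < Real.sqrt k := Real.sqrt_pos.mpr hk
  rcases eq_or_ne t 0 with rfl | ht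
  · simp
  rw [SS, if_pos (by positivity), Real.sqrt_mul hk.le, Real.sqrt_sq_eq_abs]
  rcases ht.lt_or_gt with ht | ht
  · rw [abs_of_neg ht, mul_neg, Real.sinh_neg]
    field_simp
  · rw [abs_of_pos ht]
    field_simp

lemma mul_SS_mul_sq_of_neg (hk : k < 0) (t : ℝ) :
    t * SS (k * t ^ 2) = Real.sin (Real.sqrt (-k) * t) / Real.sqrt (-k) := by
  have hc : 0 < Real.sqrt (-k) := Real.sqrt_pos.mpr (by linarith)
  rcases eq_or_ne t 0 with rfl | ht
  · simp
  have hneg : k * t ^ 2 < 0 := mul_neg_of_neg_of_pos hk (by positivity)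
  rw [SS, if_neg hneg.not_gt, if_neg hneg.ne, show -(k * t ^ 2) = -k * t ^ 2 by ring,
    Real.sqrt_mul (by linarith), Real.sqrt_sq_eq_abs]
  rcases ht.lt_or_gt with ht | ht
  · rw [abs_of_neg ht, mul_neg, Real.sin_neg]
    field_simp
  · rw [abs_of_pos ht]
    field_simp

end Trigonometric

lemma hasDerivAt_CC_mul_sq (k x : ℝ) :
    HasDerivAt (fun t => CC (k * t ^ 2)) (k * (x * SS (k * x ^ 2))) x := by
  rcases lt_trichotomy k 0 with hk | rfl | hk
  · have hsq : Real.sqrt (-k) ^ 2 = -k := Real.sq_sqrt (by linarith)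
    have hc : Real.sqrt (-k) ≠ 0 := (Real.sqrt_pos.mpr (by linarith)).ne'
    rw [funext (CC_mul_sq_of_neg hk), mul_SS_mul_sq_of_neg hk]
    convert ((hasDerivAt_id' x).const_mul (Real.sqrt (-k))).cos using 1
    field_simp
    rw [hsq]
    ring
  · simpa [CC] using hasDerivAt_const x (1 : ℝ)
  · have hsq : Real.sqrt k ^ 2 = k := Real.sq_sqrt hk.le
    have hc : Real.sqrt k ≠ 0 := (Real.sqrt_pos.mpr hk).ne'
    rw [funext (CC_mul_sq_of_pos hk), mul_SS_mul_sq_of_pos hk]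
    convert ((hasDerivAt_id' x).const_mul (Real.sqrt k)).cosh using 1
    field_simp
    rw [hsq]

lemma hasDerivAt_mul_SS_mul_sq (k x : ℝ) :
    HasDerivAt (fun t => t * SS (k * t ^ 2)) (CC (k * x ^ 2)) x := by
  rcases lt_trichotomy k 0 with hk | rfl | hk
  · have hc : Real.sqrt (-k) ≠ 0 := (Real.sqrt_pos.mpr (by linarith)).ne'
    rw [funext (mul_SS_mul_sq_of_neg hk), CC_mul_sq_of_neg hk]
    exact ((((hasDerivAt_id' x).const_mul _).sin).div_const _).congr_deriv (by field_simp)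
  · simpa [CC, SS] using hasDerivAt_id' x
  · have hc : Real.sqrt k ≠ 0 := (Real.sqrt_pos.mpr hk).ne'
    rw [funext (mul_SS_mul_sq_of_pos hk), CC_mul_sq_of_pos hk]
    exact ((((hasDerivAt_id' x).const_mul _).sinh).div_const _).congr_deriv (by field_simp)

section EntrywiseDeriv

variable {𝕜 : Type*} [NontriviallyNormedField 𝕜] {m n p : Type*}

def HasEntrywiseDerivAt (A : 𝕜 → Matrix m n 𝕜) (D : Matrix m n 𝕜) (x : 𝕜) : Prop :=
  ∀ i j, HasDerivAt (fun s => A s i j) (D i j) x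

variable {A B : 𝕜 → Matrix m n 𝕜} {A' B' : Matrix m n 𝕜} {x : 𝕜}

lemma HasEntrywiseDerivAt.add (hA : HasEntrywiseDerivAt A A' x)
    (hB : HasEntrywiseDerivAt B B' x) :
    HasEntrywiseDerivAt (fun s => A s + B s) (A' + B') x :=
  fun i j => (hA i j).add (hB i j)

lemma HasDerivAt.hasEntrywiseDerivAt_smul_const {f : 𝕜 → 𝕜} {f' : 𝕜} (hf : HasDerivAt f f' x)
    (M : Matrix m n 𝕜) : HasEntrywiseDerivAt (fun s => f s • M) (f' • M) x :=
  fun i j => by simpa using hf.mul_const (M i j)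

lemma HasEntrywiseDerivAt.mul [Fintype n] {C : 𝕜 → Matrix n p 𝕜} {C' : Matrix n p 𝕜}
    (hA : HasEntrywiseDerivAt A A' x) (hC : HasEntrywiseDerivAt C C' x) :
    HasEntrywiseDerivAt (fun s => A s * C s) (A' * C x + A x * C') x := by
  intro i j
  simp only [mul_apply, Matrix.add_apply, ← Finset.sum_add_distrib]
  exact HasDerivAt.fun_sum fun l _ => (hA i l).mul (hC l j)

end EntrywiseDeriv

noncomputable def rotMatrix (w : ℝ) : Matrix (Fin 2) (Fin 2) ℝ :=
  !![Real.cos w, -Real.sin w; Real.sin w, Real.cos w]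

lemma rotMatrix_zero : rotMatrix 0 = 1 := by
  simp [rotMatrix, one_fin_two]

lemma det_rotMatrix (w : ℝ) : (rotMatrix w).det = 1 := by
  simp [rotMatrix, det_fin_two, ← sq, Real.cos_sq_add_sin_sq]

lemma hasEntrywiseDerivAt_rotMatrix (b x : ℝ) :
    HasEntrywiseDerivAt (fun s => rotMatrix (b * s))
      (b • (!![0, -1; 1, 0] * rotMatrix (b * x))) x := by
  have hcos := ((hasDerivAt_id' x).const_mul b).cos
  have hsin := ((hasDerivAt_id' x).const_mul b).sin
  intro i j
  fin_cases i <;> fin_cases j <;>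
    simp only [rotMatrix, Fin.zero_eta, Fin.mk_one, Matrix.smul_apply, mul_apply, Fin.sum_univ_two,
      of_apply, cons_val', cons_val_zero, cons_val_one, cons_val_fin_one, smul_eq_mul]
  · exact hcos.congr_deriv (by ring)
  · exact hsin.neg.congr_deriv (by ring)
  · exact hsin.congr_deriv (by ring)
  · exact hcos.congr_deriv (by ring)

lemma smul_skew_mul_rotMatrix_add_rotMatrix_mul_offDiag (a b w : ℝ) :
    b • (!![0, -1; 1, 0] * rotMatrix w) + rotMatrix w * !![0, a + b; a - b, 0] =
      a • !![-Real.sin (2 * w), Real.cos (2 * w); Real.cos (2 * w), Real.sin (2 * w)] *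
        rotMatrix w := by
  have hP := Real.sin_sq_add_cos_sq w
  rw [Real.sin_two_mul, Real.cos_two_mul]
  ext i j
  fin_cases i <;> fin_cases j <;>
    simp only [rotMatrix, Fin.zero_eta, Fin.mk_one, Matrix.add_apply, Matrix.smul_apply, mul_apply,
      Fin.sum_univ_two, of_apply, cons_val', cons_val_zero, cons_val_one, cons_val_fin_one, smul_eq_mul]
  · ring
  · linear_combination (-2 * a * Real.cos w) * hP
  · linear_combination (-2 * a * Real.cos w) * hP
  · ring

section SqScalarExp

variable {n : Type*} [DecidableEq n]

-- This is `exp (s • N)` whenever `N * N = k • 1`.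
noncomputable def sqScalarExp (k : ℝ) (N : Matrix n n ℝ) (s : ℝ) : Matrix n n ℝ :=
  CC (k * s ^ 2) • 1 + (s * SS (k * s ^ 2)) • N

lemma sqScalarExp_zero (k : ℝ) (N : Matrix n n ℝ) : sqScalarExp k N 0 = 1 := by
  simp [sqScalarExp, CC]

lemma hasEntrywiseDerivAt_sqScalarExp [Fintype n] {k : ℝ} {N : Matrix n n ℝ} (hN : N * N = k • 1)
    (x : ℝ) :
    HasEntrywiseDerivAt (sqScalarExp k N) (N * sqScalarExp k N x) x := by
  have h : HasEntrywiseDerivAt (sqScalarExp k N) _ x :=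
    ((hasDerivAt_CC_mul_sq k x).hasEntrywiseDerivAt_smul_const 1).add
      ((hasDerivAt_mul_SS_mul_sq k x).hasEntrywiseDerivAt_smul_const N)
  convert h using 1
  rw [sqScalarExp, mul_add, mul_smul_comm, mul_smul_comm, mul_one, hN]
  module

end SqScalarExp

lemma offDiag_mul_self (p q : ℝ) :
    !![0, p; q, 0] * !![0, p; q, 0] = (p * q) • (1 : Matrix (Fin 2) (Fin 2) ℝ) := by
  ext i j
  fin_cases i <;> fin_cases j <;> simp [mul_comm]

lemma det_sqScalarExp_offDiag (p q s : ℝ) : (sqScalarExp (p * q) !![0, p; q, 0] s).det = 1 := by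
  have h := CC_sq_sub_mul_SS_sq (p * q * s ^ 2)
  simp only [sqScalarExp, smul_of, smul_cons, smul_eq_mul, mul_zero, smul_empty, det_fin_two,
    Matrix.add_apply, Matrix.smul_apply, one_apply_eq, mul_one, of_apply, cons_val', cons_val_zero,
    cons_val_fin_one, add_zero, cons_val_one, ne_eq, zero_ne_one, not_false_eq_true, one_apply_ne,
    zero_add, one_ne_zero]
  linear_combination h

theorem stmt15_general (a b : ℝ) (A : ℝ → Matrix (Fin 2) (Fin 2) ℝ)
    (hA : ∀ θ : ℝ, A θ =
      !![Real.cos (b * θ), -Real.sin (b * θ); Real.sin (b * θ), Real.cos (b * θ)] *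
        (CC (a ^ 2 * θ ^ 2 - b ^ 2 * θ ^ 2) • (1 : Matrix (Fin 2) (Fin 2) ℝ) +
          SS (a ^ 2 * θ ^ 2 - b ^ 2 * θ ^ 2) •
            ((-(b * θ)) • !![(0 : ℝ), -1; 1, 0] + (a * θ) • !![(0 : ℝ), 1; 1, 0]))) :
    A 0 = 1 ∧
    ∀ θ : ℝ, ∃ D : Matrix (Fin 2) (Fin 2) ℝ,
      (∀ i j : Fin 2, HasDerivAt (fun s => A s i j) (D i j) θ) ∧
      D * (A θ)⁻¹ = a • !![-Real.sin (2 * b * θ), Real.cos (2 * b * θ);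
        Real.cos (2 * b * θ), Real.sin (2 * b * θ)] := by
  set N : Matrix (Fin 2) (Fin 2) ℝ := !![0, a + b; a - b, 0]
  set M := sqScalarExp ((a + b) * (a - b)) N
  obtain rfl : A = fun θ => rotMatrix (b * θ) * M θ := by
    funext θ
    rw [hA θ, rotMatrix, show a ^ 2 * θ ^ 2 - b ^ 2 * θ ^ 2 = (a + b) * (a - b) * θ ^ 2 by ring]
    congr 2
    ext i j
    fin_cases i <;> fin_cases j <;>
      simp only [N, Fin.zero_eta, Fin.mk_one, Matrix.add_apply, Matrix.smul_apply, of_apply,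
        cons_val', cons_val_zero, cons_val_one, cons_val_fin_one, smul_eq_mul] <;>
      ring
  refine ⟨by simp only [mul_zero, rotMatrix_zero, M, sqScalarExp_zero, one_mul], fun θ =>
    ⟨_, (hasEntrywiseDerivAt_rotMatrix b θ).mul
      (hasEntrywiseDerivAt_sqScalarExp (offDiag_mul_self _ _) θ), ?_⟩⟩
  have hdet : (rotMatrix (b * θ) * M θ).det = 1 := by
    rw [det_mul, det_rotMatrix, det_sqScalarExp_offDiag, one_mul]
  beta_reduce
  -- `A' = b J R M + R (N M) = (b J R + R N) M = Ω R M = Ω A`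
  rw [← mul_assoc, ← add_mul, smul_skew_mul_rotMatrix_add_rotMatrix_mul_offDiag, mul_assoc _ (rotMatrix _),
    mul_nonsing_inv_cancel_right _ _ (hdet ▸ isUnit_one), mul_assoc 2 b θ]

theorem stmt15 (a b : ℝ) (ha : a ≠ 0) (A : ℝ → Matrix (Fin 2) (Fin 2) ℝ)
    (hA : ∀ θ : ℝ, A θ =
      !![Real.cos (b * θ), -Real.sin (b * θ); Real.sin (b * θ), Real.cos (b * θ)] *
        (CC (a ^ 2 * θ ^ 2 - b ^ 2 * θ ^ 2) • (1 : Matrix (Fin 2) (Fin 2) ℝ) +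
          SS (a ^ 2 * θ ^ 2 - b ^ 2 * θ ^ 2) •
            ((-(b * θ)) • !![(0 : ℝ), -1; 1, 0] + (a * θ) • !![(0 : ℝ), 1; 1, 0]))) :
    A 0 = 1 ∧
    ∀ θ : ℝ, ∃ D : Matrix (Fin 2) (Fin 2) ℝ,
      (∀ i j : Fin 2, HasDerivAt (fun s => A s i j) (D i j) θ) ∧
      D * (A θ)⁻¹ = a • !![-Real.sin (2 * b * θ), Real.cos (2 * b * θ);
        Real.cos (2 * b * θ), Real.sin (2 * b * θ)] :=
  stmt15_general a b A hA
end

section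
/- For t ∈ [0,1), let M(t) = −[[cos(π√(1−t²)), (t+1)·sin(π√(1−t²))/√(1−t²)],[(t−1)·sin(π√(1−t²))/√(1−t²), cos(π√(1−t²))]]. Then M(t) is log-able with log M(t) = π(1/√(1−t²) − 1)·[[0, −t−1],[−t+1, 0]], and ‖log M(t)‖₂ = π(1/√(1−t²) − 1)(1+t), which tends to +∞ as t → 1⁻ with asymptotics √2·π·(1−t)^{−1/2} − 2π + O((1−t)^{1/2}). -/
noncomputable def MoanEx (t : ℝ) : Matrix (Fin 2) (Fin 2) ℝ :=
  !![-Real.cos (Real.pi * Real.sqrt (1 - t ^ 2)),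
      -((t + 1) * Real.sin (Real.pi * Real.sqrt (1 - t ^ 2)) / Real.sqrt (1 - t ^ 2));
     -((t - 1) * Real.sin (Real.pi * Real.sqrt (1 - t ^ 2)) / Real.sqrt (1 - t ^ 2)),
      -Real.cos (Real.pi * Real.sqrt (1 - t ^ 2))]

noncomputable def LogEx (t : ℝ) : Matrix (Fin 2) (Fin 2) ℝ :=
  (Real.pi * (1 / Real.sqrt (1 - t ^ 2) - 1)) • !![(0 : ℝ), -t - 1; -t + 1, 0]


/-! With `s = √(1 - t²)`, the matrix `J = s⁻¹ [[0, -t-1], [1-t, 0]]` satisfies `J² = -1`, so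
`x + iy ↦ x + yJ` embeds `ℂ` into the real `2 × 2` matrices as a continuous algebra map, which
commutes with `exp`. With `θ = π (1 - s) ∈ [0, π)` we get `M(t) = cos θ + (sin θ) J = exp (θ J)`
and `L = θ J`, whose complexified spectra are `{e^{±iθ}}` (off `(-∞, 0]`) and `{±iθ}`
(inside the strip `|Im z| < π`).

`L` is antidiagonal, and `Lᵀ L` is diagonal, so `‖L‖₂` is the larger modulus of its entries,
`π (1/s - 1)(1 + t)`. Writing `u = √(1-t)`, `w = √(1+t)`, this is `π (w/u - w²)`, and since
`w - √2 = -u² / (w + √2)` it differs from `√2 π/u - 2π` by `u · π (u - 1/(w + √2))`. -/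

open NormedSpace Matrix Filter Topology Real

theorem exp_smul_of_mul_self_eq_neg_one {A : Type*} [NormedRing A] [NormedAlgebra ℝ A] [Algebra ℚ A]
    {J : A} (hJ : J * J = -1) (θ : ℝ) :
    exp (θ • J) = cos θ • 1 + sin θ • J := by
  have hcont : Continuous (Complex.liftAux J hJ) :=
    (Complex.liftAux J hJ).toLinearMap.continuous_of_finiteDimensional
  have hθ : θ • J = Complex.liftAux J hJ (θ * Complex.I) := by simp [Complex.liftAux_apply]
  rw [hθ, ← map_exp _ hcont, ← Complex.exp_eq_exp_ℂ, Complex.exp_mul_I]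
  simp [Complex.liftAux_apply, ← Complex.ofReal_cos, ← Complex.ofReal_sin,
    Algebra.algebraMap_eq_smul_one]

theorem Matrix.mem_spectrum_fin_two {K : Type*} [Field K] (A : Matrix (Fin 2) (Fin 2) K) (z : K) :
    z ∈ spectrum K A ↔ (z - A 0 0) * (z - A 1 1) - A 0 1 * A 1 0 = 0 := by
  rw [spectrum.mem_iff, ← not_iff_not, not_not, isUnit_iff_isUnit_det, isUnit_iff_ne_zero,
    det_fin_two]
  simp [algebraMap_matrix_apply]

theorem fin_two_antidiag_mul_self {p q : ℝ} (hpq : p * q = -1) :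
    !![0, p; q, 0] * !![0, p; q, 0] = -1 := by
  ext i j
  fin_cases i <;> fin_cases j <;> simp [hpq, mul_comm q p]

theorem mem_spectrum_smul_one_add_smul_fin_two_antidiag {a b p q : ℝ} (hpq : p * q = -1)
    (z : ℂ) :
    z ∈ spectrum ℂ ((a • 1 + b • !![0, p; q, 0] : Matrix (Fin 2) (Fin 2) ℝ).map ((↑) : ℝ → ℂ)) ↔
      z = a + b * Complex.I ∨ z = a - b * Complex.I := by
  have hpq' : (p : ℂ) * q = -1 := by exact_mod_cast hpq
  have hfactor : (z - a) * (z - a) - b * p * (b * q) =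
      (z - (a + b * Complex.I)) * (z - (a - b * Complex.I)) := by
    linear_combination (-(b : ℂ) ^ 2) * hpq' + (b : ℂ) ^ 2 * Complex.I_sq
  rw [mem_spectrum_fin_two]
  simp [hfactor, sub_eq_zero]

theorem pi_norm_vec_two (a b : ℝ) : ‖![a, b]‖ = max |a| |b| := by
  apply le_antisymm
  · exact (pi_norm_le_iff_of_nonneg (by positivity)).2 fun i => by fin_cases i <;> simp
  · exact max_le (by simpa using norm_le_pi_norm ![a, b] 0)
      (by simpa using norm_le_pi_norm ![a, b] 1)

open scoped Matrix.Norms.L2Operator in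
theorem l2_opNorm_fin_two_antidiag (p q : ℝ) : ‖!![0, p; q, 0]‖ = max |p| |q| := by
  have h := l2_opNorm_conjTranspose_mul_self !![0, p; q, 0]
  have hd : (!![0, p; q, 0])ᴴ * !![0, p; q, 0] = diagonal ![q ^ 2, p ^ 2] := by
    ext i j; fin_cases i <;> fin_cases j <;> simp [Matrix.mul_apply, sq]
  have hmax : max |q ^ 2| |p ^ 2| = max |p| |q| * max |p| |q| := by
    rcases le_total |p| |q| with h | h <;>
      simp [h, sq_le_sq.2 h, ← sq]
  rw [hd, l2_opNorm_diagonal, pi_norm_vec_two, hmax] at h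
  exact (mul_self_inj (norm_nonneg _) (by positivity)).1 h.symm

noncomputable def moanAngle (t : ℝ) : ℝ := π * (1 - √(1 - t ^ 2))

noncomputable def moanJ (t : ℝ) : Matrix (Fin 2) (Fin 2) ℝ :=
  !![0, (-t - 1) / √(1 - t ^ 2); (-t + 1) / √(1 - t ^ 2), 0]

section

variable {t : ℝ}

theorem moanJ_antidiag_mul (ht : t ^ 2 < 1) :
    (-t - 1) / √(1 - t ^ 2) * ((-t + 1) / √(1 - t ^ 2)) = -1 := by
  have hs : √(1 - t ^ 2) ^ 2 = 1 - t ^ 2 := sq_sqrt (by linarith)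
  have hs0 : √(1 - t ^ 2) ≠ 0 := (sqrt_pos.2 (by linarith)).ne'
  field_simp
  linear_combination hs

theorem moanJ_mul_self (ht : t ^ 2 < 1) : moanJ t * moanJ t = -1 :=
  fin_two_antidiag_mul_self (moanJ_antidiag_mul ht)

theorem moanAngle_mem_Ico (ht : t ^ 2 < 1) : moanAngle t ∈ Set.Ico 0 π := by
  have hs0 : 0 < √(1 - t ^ 2) := sqrt_pos.2 (by linarith)
  have hs1 : √(1 - t ^ 2) ≤ 1 := sqrt_le_one.2 (by nlinarith)
  constructor <;> unfold moanAngle <;> nlinarith [pi_pos]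

theorem MoanEx_eq (t : ℝ) : MoanEx t = cos (moanAngle t) • 1 + sin (moanAngle t) • moanJ t := by
  have hcos : cos (moanAngle t) = -cos (π * √(1 - t ^ 2)) := by
    rw [moanAngle, mul_one_sub, cos_pi_sub]
  have hsin : sin (moanAngle t) = sin (π * √(1 - t ^ 2)) := by
    rw [moanAngle, mul_one_sub, sin_pi_sub]
  ext i j
  fin_cases i <;> fin_cases j <;> simp [MoanEx, moanJ, hcos, hsin] <;> ring

theorem LogEx_eq (ht : t ^ 2 < 1) : LogEx t = moanAngle t • moanJ t := by
  have hs0 : √(1 - t ^ 2) ≠ 0 := (sqrt_pos.2 (by linarith)).ne'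
  ext i j
  fin_cases i <;> fin_cases j <;> simp [LogEx, moanAngle, moanJ] <;> field_simp

theorem logAble_MoanEx (ht : t ^ 2 < 1) : LogAble (MoanEx t) := by
  obtain ⟨hθ0, hθπ⟩ := moanAngle_mem_Ico ht
  rintro z hz ⟨him, hre⟩
  rw [MoanEx_eq, moanJ,
    mem_spectrum_smul_one_add_smul_fin_two_antidiag (moanJ_antidiag_mul ht)] at hz
  have hsin : sin (moanAngle t) = 0 := by
    rcases hz with rfl | rfl <;> simpa [Complex.sin_ofReal_re] using him
  have hθ : moanAngle t = 0 := (sin_eq_zero_iff_of_lt_of_lt (by linarith) hθπ).1 hsin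
  rcases hz with rfl | rfl <;> simp [hθ] at hre <;> linarith

open scoped Matrix.Norms.L2Operator in
theorem isPrincipalLog_LogEx (ht : t ^ 2 < 1) : IsPrincipalLog (MoanEx t) (LogEx t) := by
  obtain ⟨hθ0, hθπ⟩ := moanAngle_mem_Ico ht
  refine ⟨?_, fun z hz => ?_⟩
  · rw [LogEx_eq ht, MoanEx_eq]
    exact exp_smul_of_mul_self_eq_neg_one (moanJ_mul_self ht) _
  · have hL : LogEx t = (0 : ℝ) • 1 + moanAngle t • moanJ t := by
      rw [LogEx_eq ht, zero_smul, zero_add]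
    rw [hL, moanJ, mem_spectrum_smul_one_add_smul_fin_two_antidiag (moanJ_antidiag_mul ht)] at hz
    rcases hz with rfl | rfl <;> simp <;> constructor <;> linarith

open scoped Matrix.Norms.L2Operator in
theorem opNorm_LogEx (ht : t ∈ Set.Ico 0 1) :
    opNorm (LogEx t) = π * (1 / √(1 - t ^ 2) - 1) * (1 + t) := by
  obtain ⟨ht0, ht1⟩ := ht
  have hs0 : 0 < √(1 - t ^ 2) := sqrt_pos.2 (by nlinarith)
  have hs1 : √(1 - t ^ 2) ≤ 1 := sqrt_le_one.2 (by nlinarith)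
  have hc : 0 ≤ π * (1 / √(1 - t ^ 2) - 1) :=
    mul_nonneg pi_pos.le (sub_nonneg.2 ((one_le_div hs0).2 hs1))
  rw [opNorm, ← cstar_norm_def, LogEx, norm_smul, l2_opNorm_fin_two_antidiag,
    Real.norm_of_nonneg hc, abs_of_nonpos (by linarith), abs_of_nonneg (by linarith),
    max_eq_left (by linarith)]
  ring

theorem opNorm_LogEx_sub_asymptote (ht : t ∈ Set.Ico 0 1) :
    opNorm (LogEx t) - (√2 * π / √(1 - t) - 2 * π) =
      √(1 - t) * (π * (√(1 - t) - (√(1 + t) + √2)⁻¹)) := by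
  have hu : √(1 - t) ^ 2 = 1 - t := sq_sqrt (by linarith [ht.2])
  have hw : √(1 + t) ^ 2 = 1 + t := sq_sqrt (by linarith [ht.1])
  have h2 : √2 ^ 2 = 2 := sq_sqrt zero_le_two
  have hu0 : 0 < √(1 - t) := sqrt_pos.2 (by linarith [ht.2])
  have hw0 : 0 < √(1 + t) := sqrt_pos.2 (by linarith [ht.1])
  have hs : √(1 - t ^ 2) = √(1 - t) * √(1 + t) := by
    rw [← sqrt_mul (by linarith [ht.2])]
    congr 1
    ring
  have hnorm : opNorm (LogEx t) = π * √(1 + t) / √(1 - t) - π * √(1 + t) ^ 2 := by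
    rw [opNorm_LogEx ht, hs]
    field_simp
    rw [hw]
  have hdiff : √(1 + t) - √2 = -√(1 - t) ^ 2 / (√(1 + t) + √2) := by
    rw [eq_div_iff (by positivity)]
    linear_combination hw - h2 + hu
  calc opNorm (LogEx t) - (√2 * π / √(1 - t) - 2 * π)
      = π * (√(1 + t) - √2) / √(1 - t) + π * √(1 - t) ^ 2 := by
        rw [hnorm]
        field_simp
        linear_combination (-√(1 - t)) * (hu + hw)
    _ = √(1 - t) * (π * (√(1 - t) - (√(1 + t) + √2)⁻¹)) := by
        rw [hdiff]
        field_simp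
        ring

end

theorem tendsto_sqrt_one_sub_nhdsLT : Tendsto (fun t : ℝ => √(1 - t)) (𝓝[<] 1) (𝓝[>] 0) := by
  refine tendsto_nhdsWithin_iff.2 ⟨?_, ?_⟩
  · have h : Tendsto (fun t : ℝ => √(1 - t)) (𝓝 1) (𝓝 (√(1 - 1))) :=
      Continuous.tendsto (by fun_prop) 1
    simpa using h.mono_left nhdsWithin_le_nhds
  · filter_upwards [self_mem_nhdsWithin] with t ht
    exact sqrt_pos.2 (sub_pos.2 ht)

theorem isBigO_opNorm_LogEx_sub :
    (fun t => opNorm (LogEx t) - (√2 * π / √(1 - t) - 2 * π)) =O[𝓝[<] 1] fun t => √(1 - t) := by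
  have hbdd : (fun t : ℝ => π * (√(1 - t) - (√(1 + t) + √2)⁻¹)) =O[𝓝[<] 1] fun _ => (1 : ℝ) := by
    have hcont : ContinuousAt (fun t : ℝ => π * (√(1 - t) - (√(1 + t) + √2)⁻¹)) 1 := by
      fun_prop (disch := positivity)
    exact (hcont.tendsto.mono_left nhdsWithin_le_nhds).isBigO_one ℝ
  have hIco : Set.Ico (0 : ℝ) 1 ∈ 𝓝[<] 1 := Ico_mem_nhdsLT (by norm_num)
  refine ((Asymptotics.isBigO_refl (fun t : ℝ => √(1 - t)) _).mul hbdd).congr' ?_ ?_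
  · filter_upwards [hIco] with t ht using (opNorm_LogEx_sub_asymptote ht).symm
  · simp

theorem tendsto_opNorm_LogEx : Tendsto (fun t => opNorm (LogEx t)) (𝓝[<] 1) atTop := by
  have hsmall := isBigO_opNorm_LogEx_sub.trans_tendsto
    (tendsto_sqrt_one_sub_nhdsLT.mono_right nhdsWithin_le_nhds)
  have hlarge : Tendsto (fun t : ℝ => √2 * π / √(1 - t) - 2 * π) (𝓝[<] 1) atTop := by
    simp_rw [div_eq_mul_inv]
    exact tendsto_atTop_add_const_right _ _
      ((tendsto_inv_nhdsGT_zero.comp tendsto_sqrt_one_sub_nhdsLT).const_mul_atTop (by positivity))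
  simpa using hlarge.atTop_add hsmall

theorem stmt16 :
    (∀ t ∈ Set.Ico (0 : ℝ) 1,
      LogAble (MoanEx t) ∧ IsPrincipalLog (MoanEx t) (LogEx t) ∧
        opNorm (LogEx t) = Real.pi * (1 / Real.sqrt (1 - t ^ 2) - 1) * (1 + t)) ∧
    Filter.Tendsto (fun t => opNorm (LogEx t)) (nhdsWithin 1 (Set.Iio 1)) Filter.atTop ∧
    Asymptotics.IsBigO (nhdsWithin 1 (Set.Iio 1))
      (fun t => opNorm (LogEx t) - (Real.sqrt 2 * Real.pi / Real.sqrt (1 - t) - 2 * Real.pi))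
      (fun t => Real.sqrt (1 - t)) := by
  refine ⟨fun t ht => ?_, tendsto_opNorm_LogEx, isBigO_opNorm_LogEx_sub⟩
  have ht2 : t ^ 2 < 1 := by nlinarith [ht.1, ht.2]
  exact ⟨logAble_MoanEx ht2, isPrincipalLog_LogEx ht2, opNorm_LogEx ht⟩
end

section
/- For each p ∈ (0, π) and t ∈ (−π/2, π/2), define Ω_p(t) = e^{p cos t + i p sin t} − (sinh(p cos t)/cos t)·e^{i(t + p sin t)}. Then also Ω_p(t) = e^{−p cos t + i p sin t} + (sinh(p cos t)/cos t)·e^{i(−t + p sin t)}, and consequently the circle of center Ω_p(t) and radius ω_p(t) = sinh(p cos t)/cos t passes through both boundary points e^{p cos t + i p sin t} and e^{−p cos t + i p sin t} of the curve γ_p(s) = e^{p e^{is}}, and is tangent to γ_p at those points. -/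
theorem stmt17 (p t : ℝ) (hp : p ∈ Set.Ioo 0 Real.pi)
    (ht : t ∈ Set.Ioo (-(Real.pi / 2)) (Real.pi / 2))
    (γ : ℝ → ℂ) (hγ : ∀ s : ℝ, γ s = Complex.exp ((p : ℂ) * Complex.exp (Complex.I * s)))
    (Ω : ℂ) (ω : ℝ) (hω : ω = Real.sinh (p * Real.cos t) / Real.cos t)
    (hΩ : Ω = Complex.exp (((p * Real.cos t : ℝ) : ℂ) + Complex.I * ((p * Real.sin t : ℝ) : ℂ)) -
      (ω : ℂ) * Complex.exp (Complex.I * ((t + p * Real.sin t : ℝ) : ℂ))) :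
    Ω = Complex.exp ((-(p * Real.cos t) : ℝ) + Complex.I * ((p * Real.sin t : ℝ) : ℂ)) +
        (ω : ℂ) * Complex.exp (Complex.I * ((-t + p * Real.sin t : ℝ) : ℂ)) ∧
    ‖γ t - Ω‖ = ω ∧
    ‖γ (Real.pi - t) - Ω‖ = ω ∧
    (deriv γ t * (starRingEnd ℂ) (γ t - Ω)).re = 0 ∧
    (deriv γ (Real.pi - t) * (starRingEnd ℂ) (γ (Real.pi - t) - Ω)).re = 0 := by
  obtain ⟨hp0, hpπ⟩ := hp
  have hcos : 0 < Real.cos t := Real.cos_pos_of_mem_Ioo ht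
  have hc0 : 0 < p * Real.cos t := mul_pos hp0 hcos
  have hω0 : 0 ≤ ω := by
    rw [hω]
    exact div_nonneg ((Real.sinh_nonneg_iff.mpr hc0.le)) hcos.le
  -- key real relation
  have hωR : ω * Real.cos t = Real.sinh (p * Real.cos t) := by
    rw [hω]; field_simp
  -- complex versions of exponents
  have hpe : (p : ℂ) * Complex.exp (Complex.I * t) =
      ((p * Real.cos t : ℝ) : ℂ) + Complex.I * ((p * Real.sin t : ℝ) : ℂ) := by
    rw [mul_comm Complex.I, Complex.exp_mul_I]
    push_cast
    ring
  have hpe' : (p : ℂ) * Complex.exp (Complex.I * ((Real.pi - t : ℝ) : ℂ)) =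
      ((-(p * Real.cos t) : ℝ) : ℂ) + Complex.I * ((p * Real.sin t : ℝ) : ℂ) := by
    rw [mul_comm Complex.I, Complex.exp_mul_I]
    push_cast
    rw [Complex.cos_pi_sub, Complex.sin_pi_sub]
    ring
  have hγt : γ t = Complex.exp (((p * Real.cos t : ℝ) : ℂ) + Complex.I * ((p * Real.sin t : ℝ) : ℂ)) := by
    rw [hγ, hpe]
  have hγπ : γ (Real.pi - t) =
      Complex.exp (((-(p * Real.cos t) : ℝ) : ℂ) + Complex.I * ((p * Real.sin t : ℝ) : ℂ)) := by
    rw [hγ]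
    norm_cast at hpe' ⊢
    rw [hpe']
  -- key complex identity
  have key : Complex.exp ((p * Real.cos t : ℝ) : ℂ) - Complex.exp (-((p * Real.cos t : ℝ) : ℂ)) =
      (ω : ℂ) * (Complex.exp (Complex.I * t) + Complex.exp (-(Complex.I * t))) := by
    have h2s : Complex.exp ((p * Real.cos t : ℝ) : ℂ) - Complex.exp (-((p * Real.cos t : ℝ) : ℂ)) =
        2 * ((Real.sinh (p * Real.cos t) : ℝ) : ℂ) := by
      push_cast
      rw [← Complex.two_sinh]
    have h2c : Complex.exp (Complex.I * t) + Complex.exp (-(Complex.I * t)) =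
        2 * ((Real.cos t : ℝ) : ℂ) := by
      rw [mul_comm Complex.I, ← neg_mul, ← Complex.two_cos]
      push_cast
      ring
    rw [h2s, h2c, ← hωR]
    push_cast
    ring
  have part1 : Ω = Complex.exp ((-(p * Real.cos t) : ℝ) + Complex.I * ((p * Real.sin t : ℝ) : ℂ)) +
      (ω : ℂ) * Complex.exp (Complex.I * ((-t + p * Real.sin t : ℝ) : ℂ)) := by
    rw [hΩ]
    have e1 : Complex.exp (((p * Real.cos t : ℝ) : ℂ) + Complex.I * ((p * Real.sin t : ℝ) : ℂ)) =
        Complex.exp ((p * Real.cos t : ℝ) : ℂ) * Complex.exp (Complex.I * ((p * Real.sin t : ℝ) : ℂ)) :=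
      Complex.exp_add _ _
    have e2 : Complex.exp ((-(p * Real.cos t) : ℝ) + Complex.I * ((p * Real.sin t : ℝ) : ℂ)) =
        Complex.exp (-((p * Real.cos t : ℝ) : ℂ)) * Complex.exp (Complex.I * ((p * Real.sin t : ℝ) : ℂ)) := by
      rw [← Complex.exp_add]
      congr 1
      push_cast
      ring
    have e3 : Complex.exp (Complex.I * ((t + p * Real.sin t : ℝ) : ℂ)) =
        Complex.exp (Complex.I * t) * Complex.exp (Complex.I * ((p * Real.sin t : ℝ) : ℂ)) := by
      rw [← Complex.exp_add]
      congr 1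
      push_cast
      ring
    have e4 : Complex.exp (Complex.I * ((-t + p * Real.sin t : ℝ) : ℂ)) =
        Complex.exp (-(Complex.I * t)) * Complex.exp (Complex.I * ((p * Real.sin t : ℝ) : ℂ)) := by
      rw [← Complex.exp_add]
      congr 1
      push_cast
      ring
    rw [e1, e2, e3, e4]
    linear_combination Complex.exp (Complex.I * ((p * Real.sin t : ℝ) : ℂ)) * key
  have hdiff1 : γ t - Ω = (ω : ℂ) * Complex.exp (Complex.I * ((t + p * Real.sin t : ℝ) : ℂ)) := by
    rw [hγt, hΩ]; ring
  have hdiff2 : γ (Real.pi - t) - Ω =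
      -((ω : ℂ) * Complex.exp (Complex.I * ((-t + p * Real.sin t : ℝ) : ℂ))) := by
    rw [hγπ, part1]; ring
  have habs : ∀ x : ℝ, ‖Complex.exp (Complex.I * (x : ℂ))‖ = 1 := by
    intro x
    rw [Complex.norm_exp]
    simp
  have hconj : ∀ x : ℝ, (starRingEnd ℂ) (Complex.exp (Complex.I * (x : ℂ))) =
      Complex.exp (-(Complex.I * (x : ℂ))) := by
    intro x
    rw [← Complex.exp_conj, map_mul, Complex.conj_I, Complex.conj_ofReal, neg_mul]
  have hderiv : ∀ s : ℝ, HasDerivAt γ (γ s * ((p : ℂ) * Complex.exp (Complex.I * s) * Complex.I)) s := by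
    intro s
    have hγfun : γ = fun u : ℝ => Complex.exp ((p : ℂ) * Complex.exp (Complex.I * u)) := funext hγ
    rw [hγfun]
    have h1 : HasDerivAt (fun u : ℝ => (u : ℂ)) 1 s := by
      simpa using (hasDerivAt_id s).ofReal_comp
    have h2 := h1.const_mul Complex.I
    have h3 := h2.cexp
    have h4 := h3.const_mul (p : ℂ)
    have h5 := h4.cexp
    convert h5 using 1
    ring
  refine ⟨part1, ?_, ?_, ?_, ?_⟩
  · rw [hdiff1, norm_mul, habs, Complex.norm_real, Real.norm_eq_abs, abs_of_nonneg hω0, mul_one]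
  · rw [hdiff2, norm_neg, norm_mul, habs, Complex.norm_real, Real.norm_eq_abs, abs_of_nonneg hω0, mul_one]
  · -- derivative at t
    rw [(hderiv t).deriv, hdiff1, hγt, map_mul, Complex.conj_ofReal, hconj]
    have hsum : Complex.exp (((p * Real.cos t : ℝ) : ℂ) + Complex.I * ((p * Real.sin t : ℝ) : ℂ)) *
        Complex.exp (Complex.I * (t : ℂ)) *
        Complex.exp (-(Complex.I * ((t + p * Real.sin t : ℝ) : ℂ))) =
        Complex.exp ((p * Real.cos t : ℝ) : ℂ) := by
      rw [← Complex.exp_add, ← Complex.exp_add]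
      congr 1
      push_cast
      ring
    have hfin : Complex.exp (((p * Real.cos t : ℝ) : ℂ) + Complex.I * ((p * Real.sin t : ℝ) : ℂ)) *
        ((p : ℂ) * Complex.exp (Complex.I * (t : ℂ)) * Complex.I) *
        ((ω : ℂ) * Complex.exp (-(Complex.I * ((t + p * Real.sin t : ℝ) : ℂ)))) =
        ((p * ω * Real.exp (p * Real.cos t) : ℝ) : ℂ) * Complex.I := by
      have hcast : ((p * ω * Real.exp (p * Real.cos t) : ℝ) : ℂ) =
          (p : ℂ) * (ω : ℂ) * Complex.exp ((p * Real.cos t : ℝ) : ℂ) := by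
        push_cast
        ring
      rw [hcast]
      linear_combination ((p : ℂ) * (ω : ℂ) * Complex.I) * hsum
    rw [hfin, Complex.mul_re, Complex.I_re, Complex.I_im, Complex.ofReal_re, Complex.ofReal_im]
    ring
  · -- derivative at π - t
    rw [(hderiv (Real.pi - t)).deriv, hdiff2, hγπ, map_neg, map_mul, Complex.conj_ofReal, hconj]
    have hsum2 : Complex.exp (((-(p * Real.cos t) : ℝ) : ℂ) + Complex.I * ((p * Real.sin t : ℝ) : ℂ)) *
        Complex.exp (Complex.I * ((Real.pi - t : ℝ) : ℂ)) *
        Complex.exp (-(Complex.I * ((-t + p * Real.sin t : ℝ) : ℂ))) =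
        -Complex.exp ((-(p * Real.cos t) : ℝ) : ℂ) := by
      rw [← Complex.exp_add, ← Complex.exp_add,
        show (((-(p * Real.cos t) : ℝ) : ℂ) + Complex.I * ((p * Real.sin t : ℝ) : ℂ) +
            Complex.I * ((Real.pi - t : ℝ) : ℂ) + -(Complex.I * ((-t + p * Real.sin t : ℝ) : ℂ))) =
          ((-(p * Real.cos t) : ℝ) : ℂ) + (Real.pi : ℂ) * Complex.I from by push_cast; ring,
        Complex.exp_add, Complex.exp_pi_mul_I]
      ring
    have hfin2 : Complex.exp (((-(p * Real.cos t) : ℝ) : ℂ) + Complex.I * ((p * Real.sin t : ℝ) : ℂ)) *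
        ((p : ℂ) * Complex.exp (Complex.I * ((Real.pi - t : ℝ) : ℂ)) * Complex.I) *
        -((ω : ℂ) * Complex.exp (-(Complex.I * ((-t + p * Real.sin t : ℝ) : ℂ)))) =
        ((p * ω * Real.exp (-(p * Real.cos t)) : ℝ) : ℂ) * Complex.I := by
      have hcast : ((p * ω * Real.exp (-(p * Real.cos t)) : ℝ) : ℂ) =
          (p : ℂ) * (ω : ℂ) * Complex.exp ((-(p * Real.cos t) : ℝ) : ℂ) := by
        push_cast
        ring
      rw [hcast]
      linear_combination (-((p : ℂ) * (ω : ℂ) * Complex.I)) * hsum2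
    rw [hfin2, Complex.mul_re, Complex.I_re, Complex.I_im, Complex.ofReal_re, Complex.ofReal_im]
    ring
end

section
/- For all real x ≠ 0, (1 + x)/eˣ < x/sinh x. -/
/-! Since `exp x = sinh x + cosh x`, the difference `x / sinh x - (1 + x) / exp x` equals
`(x * cosh x - sinh x) / (sinh x * exp x)`. The numerator vanishes at `0` and has derivative
`x * sinh x > 0` away from `0`, so it has the sign of `x`, as does `sinh x`. -/

open Real

lemma sinh_lt_mul_cosh {x : ℝ} (hx : 0 < x) : sinh x < x * cosh x := by
  have hmono : StrictMonoOn (fun y : ℝ => y * cosh y - sinh y) (Set.Ici 0) := by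
    refine strictMonoOn_of_deriv_pos (convex_Ici 0) (by fun_prop) fun y hy => ?_
    rw [interior_Ici, Set.mem_Ioi] at hy
    have hderiv : deriv (fun y : ℝ => y * cosh y - sinh y) y = y * sinh y := by
      simp
    rw [hderiv]
    exact mul_pos hy (sinh_pos_iff.mpr hy)
  simpa using hmono Set.self_mem_Ici (Set.mem_Ici.mpr hx.le) hx

lemma mul_cosh_lt_sinh {x : ℝ} (hx : x < 0) : x * cosh x < sinh x := by
  have := sinh_lt_mul_cosh (neg_pos.mpr hx)
  rw [sinh_neg, cosh_neg] at this
  linarith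

lemma mul_cosh_sub_sinh_div_sinh_pos {x : ℝ} (hx : x ≠ 0) :
    0 < (x * cosh x - sinh x) / sinh x := by
  rcases hx.lt_or_gt with hneg | hpos
  · exact div_pos_of_neg_of_neg (by linarith [mul_cosh_lt_sinh hneg]) (sinh_neg_iff.mpr hneg)
  · exact div_pos (by linarith [sinh_lt_mul_cosh hpos]) (sinh_pos_iff.mpr hpos)

theorem stmt18 (x : ℝ) (hx : x ≠ 0) : (1 + x) / Real.exp x < x / Real.sinh x := by
  have hsinh : sinh x ≠ 0 := by rwa [Ne, sinh_eq_zero]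
  have hgap : x / sinh x - (1 + x) / exp x = (x * cosh x - sinh x) / sinh x / exp x := by
    field_simp
    rw [← sinh_add_cosh]
    ring
  linarith [div_pos (mul_cosh_sub_sinh_div_sinh_pos hx) (exp_pos x)]
end

section
/- For p ∈ (0, π) and t ∈ (0, π), define f_p(t) = −(sin t − e^{p cos t} sin(t − p sin t))/(sin t − e^{−p cos t} sin(t + p sin t)). Then both the numerator and the denominator of −f_p are positive (indeed sin t − e^{±p cos t} sin(t ∓ p sin t) = ∫₀ᵖ e^{±q cos t} sin(q sin t) dq > 0), and f_p is strictly increasing on (0, π), with f_p′(t) = (sin(p sin t) − p sin t · cos(p sin t))·(e^{p cos t} + e^{−p cos t} − 2cos(p sin t)) / (sin t − e^{−p cos t} sin(t + p sin t))². -/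
open Real Set intervalIntegral

noncomputable def expSinInt (p t : ℝ) : ℝ :=
  sin t - exp (p * cos t) * sin (t - p * sin t)

noncomputable def expSinIntDeriv (p t : ℝ) : ℝ :=
  cos t + exp (p * cos t) *
    (p * sin t * sin (t - p * sin t) - (1 - p * cos t) * cos (t - p * sin t))

lemma hasDerivAt_expSinInt_left (p t : ℝ) :
    HasDerivAt (fun q => expSinInt q t) (exp (p * cos t) * sin (p * sin t)) p := by
  have h := (((hasDerivAt_mul_const (x := p) (cos t)).exp).mul
    (((hasDerivAt_mul_const (sin t)).const_sub t).sin)).const_sub (sin t)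
  refine h.congr_deriv ?_
  have : sin (p * sin t) = sin t * cos (t - p * sin t) - cos t * sin (t - p * sin t) := by
    rw [← sin_sub, sub_sub_cancel]
  rw [this]
  ring

lemma expSinInt_eq_integral (p t : ℝ) :
    expSinInt p t = ∫ q in (0 : ℝ)..p, exp (q * cos t) * sin (q * sin t) := by
  have hc : Continuous fun q => exp (q * cos t) * sin (q * sin t) := by fun_prop
  rw [integral_eq_sub_of_hasDerivAt (fun q _ => hasDerivAt_expSinInt_left q t)
    (hc.intervalIntegrable 0 p)]
  simp [expSinInt]

lemma expSinInt_pos {p t : ℝ} (hp : 0 < p) (ht : 0 < sin t) (hpt : p * sin t ≤ π) :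
    0 < expSinInt p t := by
  rw [expSinInt_eq_integral]
  have hc : Continuous fun q => exp (q * cos t) * sin (q * sin t) := by fun_prop
  refine intervalIntegral_pos_of_pos_on (hc.intervalIntegrable 0 p) (fun q hq => ?_) hp
  refine mul_pos (exp_pos _) (sin_pos_of_pos_of_lt_pi (mul_pos hq.1 ht) ?_)
  calc q * sin t < p * sin t := mul_lt_mul_of_pos_right hq.2 ht
    _ ≤ π := hpt

lemma expSinInt_neg_left (p t : ℝ) : expSinInt (-p) t = expSinInt p (π - t) := by
  rw [expSinInt, expSinInt, sin_pi_sub, cos_pi_sub, sub_sub, sin_pi_sub]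
  ring_nf

lemma hasDerivAt_expSinInt (p t : ℝ) : HasDerivAt (expSinInt p) (expSinIntDeriv p t) t := by
  have h := (hasDerivAt_sin t).sub (((hasDerivAt_cos t).const_mul p).exp.mul
    ((hasDerivAt_id t).sub ((hasDerivAt_sin t).const_mul p)).sin)
  refine h.congr_deriv ?_
  simp only [expSinIntDeriv, Pi.sub_apply, id]
  ring

lemma expSinInt_wronskian (p t : ℝ) :
    expSinInt p t * expSinIntDeriv (-p) t - expSinIntDeriv p t * expSinInt (-p) t =
      (sin (p * sin t) - p * sin t * cos (p * sin t)) *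
        (exp (p * cos t) + exp (-(p * cos t)) - 2 * cos (p * sin t)) := by
  have hsc := sin_sq_add_cos_sq t
  have hexp : exp (p * cos t) * exp (-(p * cos t)) = 1 := by
    rw [← exp_add, add_neg_cancel, exp_zero]
  simp only [expSinInt, expSinIntDeriv, neg_mul, sub_neg_eq_add, sin_sub, cos_sub, sin_add,
    cos_add]
  -- Expanded, the left side is `(S - b C) (sin² t + cos² t) (E + F - 2 C E F)`
  -- with `b = p sin t`, `S = sin b`, `C = cos b`, `E = exp (p cos t)`, `F = exp (-(p cos t))`.
  linear_combination
    (sin (p * sin t) - p * sin t * cos (p * sin t)) *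
        (exp (p * cos t) + exp (-(p * cos t)) -
          2 * cos (p * sin t) * exp (p * cos t) * exp (-(p * cos t))) * hsc -
      2 * cos (p * sin t) * (sin (p * sin t) - p * sin t * cos (p * sin t)) * hexp

lemma sin_sub_mul_cos_pos {x : ℝ} (h0 : 0 < x) (hπ : x < π) : 0 < sin x - x * cos x := by
  rcases lt_or_ge x (π / 2) with hx | hx
  · have hcos : 0 < cos x := cos_pos_of_mem_Ioo ⟨by linarith, hx⟩
    have := lt_tan h0 hx
    rw [tan_eq_sin_div_cos, lt_div_iff₀ hcos] at this
    linarith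
  · have hcos : cos x ≤ 0 := cos_nonpos_of_pi_div_two_le_of_le hx (by linarith)
    nlinarith [sin_pos_of_pos_of_lt_pi h0 hπ]

lemma two_mul_cos_lt_exp_add_exp_neg (a : ℝ) {b : ℝ} (h0 : 0 < b) (hπ : b < π) :
    2 * cos b < exp a + exp (-a) := by
  have hcos : cos b < cos 0 := cos_lt_cos_of_nonneg_of_le_pi le_rfl hπ.le h0
  have hcosh := one_le_cosh a
  rw [cos_zero] at hcos
  rw [cosh_eq] at hcosh
  linarith

lemma mul_sin_mem_Ioo {p t : ℝ} (hp : p ∈ Ioo 0 π) (ht : t ∈ Ioo 0 π) :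
    p * sin t ∈ Ioo 0 π :=
  ⟨mul_pos hp.1 (sin_pos_of_pos_of_lt_pi ht.1 ht.2),
    (mul_le_of_le_one_right hp.1.le (sin_le_one t)).trans_lt hp.2⟩

lemma hasDerivAt_expSinInt_div {p t : ℝ} (hden : expSinInt (-p) t ≠ 0) :
    HasDerivAt (fun t => -expSinInt p t / expSinInt (-p) t)
      ((sin (p * sin t) - p * sin t * cos (p * sin t)) *
        (exp (p * cos t) + exp (-(p * cos t)) - 2 * cos (p * sin t)) / expSinInt (-p) t ^ 2)
      t := by
  refine ((hasDerivAt_expSinInt p t).neg.div (hasDerivAt_expSinInt (-p) t) hden).congr_deriv ?_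
  rw [← expSinInt_wronskian, Pi.neg_apply]
  ring

theorem stmt19 (p : ℝ) (hp : p ∈ Set.Ioo 0 Real.pi) (num den f : ℝ → ℝ)
    (hnum : ∀ t, num t = Real.sin t - Real.exp (p * Real.cos t) * Real.sin (t - p * Real.sin t))
    (hden : ∀ t, den t = Real.sin t - Real.exp (-(p * Real.cos t)) * Real.sin (t + p * Real.sin t))
    (hf : ∀ t, f t = -(num t) / den t) :
    (∀ t ∈ Set.Ioo (0 : ℝ) Real.pi,
      (num t = ∫ q in (0 : ℝ)..p, Real.exp (q * Real.cos t) * Real.sin (q * Real.sin t)) ∧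
      (den t = ∫ q in (0 : ℝ)..p, Real.exp (-(q * Real.cos t)) * Real.sin (q * Real.sin t)) ∧
      0 < num t ∧ 0 < den t ∧
      HasDerivAt f
        ((Real.sin (p * Real.sin t) - p * Real.sin t * Real.cos (p * Real.sin t)) *
            (Real.exp (p * Real.cos t) + Real.exp (-(p * Real.cos t)) -
              2 * Real.cos (p * Real.sin t)) / (den t) ^ 2) t) ∧
    StrictMonoOn f (Set.Ioo (0 : ℝ) Real.pi) := by
  obtain rfl : num = expSinInt p := funext hnum
  obtain rfl : den = expSinInt (-p) := funext fun t => by rw [hden, expSinInt]; ring_nf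
  obtain rfl : f = fun t => -expSinInt p t / expSinInt (-p) t := funext hf
  have hnum_pos : ∀ t ∈ Ioo 0 π, 0 < expSinInt p t := fun t ht =>
    expSinInt_pos hp.1 (sin_pos_of_pos_of_lt_pi ht.1 ht.2) (mul_sin_mem_Ioo hp ht).2.le
  have hden_pos : ∀ t ∈ Ioo 0 π, 0 < expSinInt (-p) t := fun t ht => by
    rw [expSinInt_neg_left]
    exact hnum_pos (π - t) ⟨by linarith [ht.2], by linarith [ht.1]⟩
  have hderiv t (ht : t ∈ Ioo 0 π) := hasDerivAt_expSinInt_div (p := p) (hden_pos t ht).ne'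
  refine ⟨fun t ht => ⟨expSinInt_eq_integral p t, ?_, hnum_pos t ht, hden_pos t ht, hderiv t ht⟩,
    strictMonoOn_of_deriv_pos (convex_Ioo 0 π)
      (fun t ht => (hderiv t ht).continuousAt.continuousWithinAt) fun t ht => ?_⟩
  · rw [expSinInt_neg_left, expSinInt_eq_integral]
    simp only [sin_pi_sub, cos_pi_sub, mul_neg]
  · rw [interior_Ioo] at ht
    obtain ⟨hb0, hbπ⟩ := mul_sin_mem_Ioo hp ht
    rw [(hderiv t ht).deriv]
    exact div_pos (mul_pos (sin_sub_mul_cos_pos hb0 hbπ)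
      (sub_pos.2 (two_mul_cos_lt_exp_add_exp_neg _ hb0 hbπ))) (pow_pos (hden_pos t ht) 2)
end
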